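/- arXiv:1407.8199 — 10 statements merged into one kernel-verified Lean document; each statement's English description precedes it below -/
import Mathlib

section
/- Let ψ : ℝ → ℝ be twice continuously differentiable with ψ''(s) + ψ'(s) − 2ψ(s) + ψ(s)³ = 0 for all s ∈ ℝ, and suppose ψ(s) → 0 and ψ'(s) → 0 as s → +∞. Then for every s ∈ ℝ the function ρ ↦ ψ'(ρ)² is integrable on [s,∞) and ∫_{s}^{∞} ψ'(ρ)² dρ = (1/2)·ψ'(s)² − ψ(s)² + (1/4)·ψ(s)⁴. -/
open Set MeasureTheory Filter

/-!
Along a solution of the damped equation `ψ'' + c ψ' + V'(ψ) = 0` the energy `½ ψ'² + V(ψ)`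
decreases at the rate `c ψ'²`. Here `c = 1` and `V(y) = -y² + y⁴/4`, and the energy tends to `0`
at `+∞`, so integrating the dissipation rate over `[s, ∞)` gives back the energy at `s`; positivity
of `ψ'²` yields its integrability.
-/

theorem integrableOn_Ici_and_integral_Ici_eq_of_hasDerivAt_neg {E f : ℝ → ℝ} {s l : ℝ}
    (hE : ∀ x ∈ Ici s, HasDerivAt E (-f x) x) (hf : ∀ x ∈ Ioi s, 0 ≤ f x)
    (hlim : Tendsto E atTop (nhds l)) :
    IntegrableOn f (Ici s) ∧ ∫ x in Ici s, f x = E s - l := by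
  have hE' : ∀ x ∈ Ici s, HasDerivAt (-E) (f x) x := fun x hx => by
    simpa using (hE x hx).neg
  have hlim' : Tendsto (-E) atTop (nhds (-l)) := hlim.neg
  refine ⟨(integrableOn_Ici_iff_integrableOn_Ioi).mpr
    (integrableOn_Ioi_deriv_of_nonneg' hE' hf hlim'), ?_⟩
  rw [integral_Ici_eq_integral_Ioi, integral_Ioi_of_hasDerivAt_of_nonneg' hE' hf hlim']
  simp only [Pi.neg_apply]
  ring

theorem hasDerivAt_damped_energy {ψ V dV : ℝ → ℝ} {c : ℝ} (hψ : Differentiable ℝ ψ)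
    (hψ' : Differentiable ℝ (deriv ψ)) (hV : ∀ y, HasDerivAt V (dV y) y)
    (heq : ∀ x, deriv (deriv ψ) x + c * deriv ψ x + dV (ψ x) = 0) (x : ℝ) :
    HasDerivAt (fun x => (1 / 2) * deriv ψ x ^ 2 + V (ψ x)) (-(c * deriv ψ x ^ 2)) x := by
  refine ((((hψ' x).hasDerivAt.pow 2).const_mul (1 / 2 : ℝ)).add
    ((hV (ψ x)).comp x (hψ x).hasDerivAt)).congr_deriv ?_
  push_cast
  linear_combination deriv ψ x * heq x

noncomputable def cubicPotential (y : ℝ) : ℝ := -y ^ 2 + y ^ 4 / 4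

theorem hasDerivAt_cubicPotential (y : ℝ) : HasDerivAt cubicPotential (-2 * y + y ^ 3) y := by
  refine ((hasDerivAt_pow 2 y).neg.add ((hasDerivAt_pow 4 y).div_const 4)).congr_deriv ?_
  push_cast
  ring

/-- Energy identity for the autonomous ODE ψ'' + ψ' − 2ψ + ψ³ = 0. -/
theorem cubic_autonomous_energy_identity (ψ : ℝ → ℝ) (hψ : ContDiff ℝ 2 ψ)
    (heq : ∀ s : ℝ, deriv (deriv ψ) s + deriv ψ s - 2 * ψ s + (ψ s) ^ 3 = 0)
    (hlim : Tendsto ψ atTop (nhds 0))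
    (hlim' : Tendsto (deriv ψ) atTop (nhds 0)) :
    ∀ s : ℝ,
      IntegrableOn (fun ρ => (deriv ψ ρ) ^ 2) (Ici s) ∧
      ∫ ρ in Ici s, (deriv ψ ρ) ^ 2 =
        (1 / 2) * (deriv ψ s) ^ 2 - (ψ s) ^ 2 + (1 / 4) * (ψ s) ^ 4 := by
  intro s
  have hdecay := hasDerivAt_damped_energy (c := 1) (hψ.differentiable (by norm_num))
    hψ.differentiable_deriv_two hasDerivAt_cubicPotential fun x => by linarith [heq x]
  have henergy_lim : Tendsto (fun x => (1 / 2) * deriv ψ x ^ 2 + cubicPotential (ψ x))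
      atTop (nhds 0) := by
    simpa [cubicPotential] using ((hlim'.pow 2).const_mul (1 / 2 : ℝ)).add
      ((hlim.pow 2).neg.add ((hlim.pow 4).div_const 4))
  obtain ⟨hint, hintegral⟩ := integrableOn_Ici_and_integral_Ici_eq_of_hasDerivAt_neg (s := s)
    (f := fun x => deriv ψ x ^ 2) (fun x _ => by simpa only [one_mul] using hdecay x)
    (fun x _ => sq_nonneg _) henergy_lim
  refine ⟨hint, hintegral.trans ?_⟩
  rw [cubicPotential]
  ring
end

section
/- Let ψ : ℝ → ℝ be twice continuously differentiable with ψ''(s) + ψ'(s) = sin(2ψ(s)) for all s ∈ ℝ, and suppose ψ(s) → 0 and ψ'(s) → 0 as s → +∞. Then for every s ∈ ℝ the function ρ ↦ ψ'(ρ)² is integrable on [s,∞) and ∫_{s}^{∞} ψ'(ρ)² dρ = (1/2)·ψ'(s)² − sin²(ψ(s)). -/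
open Set MeasureTheory Filter Topology

/-! The pendulum energy `E = ½ ψ'² + ½ cos 2ψ` satisfies `E' = ψ' (ψ'' - sin 2ψ) = -ψ'²` along a
solution, and tends to `½` at `+∞`. So `ψ'²` is the nonnegative dissipation rate of `E`, its
integral over `[s, ∞)` is the energy lost, `E s - ½`, and `½ cos 2ψ - ½ = -sin² ψ`. -/

theorem integrableOn_Ici_and_integral_eq_of_hasDerivAt_neg {E f : ℝ → ℝ} {s L : ℝ}
    (hE : ∀ x ∈ Ici s, HasDerivAt E (-f x) x) (hf : ∀ x ∈ Ioi s, 0 ≤ f x)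
    (hlim : Tendsto E atTop (𝓝 L)) :
    IntegrableOn f (Ici s) ∧ ∫ x in Ici s, f x = E s - L := by
  have hE' : ∀ x ∈ Ici s, HasDerivAt (-E) (f x) x := fun x hx => by
    simpa using (hE x hx).neg
  refine ⟨(integrableOn_Ici_iff_integrableOn_Ioi).mpr
      (integrableOn_Ioi_deriv_of_nonneg' hE' hf hlim.neg), ?_⟩
  rw [integral_Ici_eq_integral_Ioi, integral_Ioi_of_hasDerivAt_of_nonneg' hE' hf hlim.neg]
  simp only [Pi.neg_apply]
  ring

noncomputable def pendulumEnergy (ψ : ℝ → ℝ) (x : ℝ) : ℝ :=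
  (1 / 2) * deriv ψ x ^ 2 + (1 / 2) * Real.cos (2 * ψ x)

theorem hasDerivAt_pendulumEnergy {ψ : ℝ → ℝ} (hψ : ContDiff ℝ 2 ψ) (x : ℝ) :
    HasDerivAt (pendulumEnergy ψ)
      (deriv ψ x * (deriv (deriv ψ) x - Real.sin (2 * ψ x))) x := by
  have hψ' : HasDerivAt ψ (deriv ψ x) x :=
    ((hψ.differentiable two_ne_zero) x).hasDerivAt
  have hψ'' : HasDerivAt (deriv ψ) (deriv (deriv ψ) x) x :=
    ((hψ.iterate_deriv' 1 1).differentiable one_ne_zero x).hasDerivAt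
  have h : HasDerivAt (pendulumEnergy ψ) _ x := ((hψ''.pow 2).const_mul (1 / 2)).add
    (((hψ'.const_mul 2).cos).const_mul (1 / 2))
  convert h using 1
  ring

theorem hasDerivAt_pendulumEnergy_of_solution {ψ : ℝ → ℝ} (hψ : ContDiff ℝ 2 ψ)
    (heq : ∀ s : ℝ, deriv (deriv ψ) s + deriv ψ s = Real.sin (2 * ψ s)) (x : ℝ) :
    HasDerivAt (pendulumEnergy ψ) (-(deriv ψ x ^ 2)) x := by
  convert hasDerivAt_pendulumEnergy hψ x using 1
  linear_combination -deriv ψ x * heq x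

theorem tendsto_pendulumEnergy {ψ : ℝ → ℝ} {l : Filter ℝ} (hψ : Tendsto ψ l (𝓝 0))
    (hψ' : Tendsto (deriv ψ) l (𝓝 0)) :
    Tendsto (pendulumEnergy ψ) l (𝓝 (1 / 2)) := by
  have hcos : Tendsto (fun x => Real.cos (2 * ψ x)) l (𝓝 (Real.cos (2 * 0))) :=
    (Real.continuous_cos.tendsto _).comp (hψ.const_mul 2)
  have h : Tendsto (pendulumEnergy ψ) l _ :=
    ((hψ'.pow 2).const_mul (1 / 2)).add (hcos.const_mul (1 / 2))
  simpa using h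

theorem pendulumEnergy_sub_half (ψ : ℝ → ℝ) (x : ℝ) :
    pendulumEnergy ψ x - 1 / 2 = (1 / 2) * deriv ψ x ^ 2 - Real.sin (ψ x) ^ 2 := by
  rw [pendulumEnergy, Real.cos_two_mul, Real.cos_sq']
  ring

/-- Energy identity for the damped pendulum equation ψ'' + ψ' = sin(2ψ). -/
theorem pendulum_energy_identity (ψ : ℝ → ℝ) (hψ : ContDiff ℝ 2 ψ)
    (heq : ∀ s : ℝ, deriv (deriv ψ) s + deriv ψ s = Real.sin (2 * ψ s))
    (hlim : Tendsto ψ atTop (nhds 0))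
    (hlim' : Tendsto (deriv ψ) atTop (nhds 0)) :
    ∀ s : ℝ,
      IntegrableOn (fun ρ => (deriv ψ ρ) ^ 2) (Ici s) ∧
      ∫ ρ in Ici s, (deriv ψ ρ) ^ 2 =
        (1 / 2) * (deriv ψ s) ^ 2 - (Real.sin (ψ s)) ^ 2 := by
  intro s
  rw [← pendulumEnergy_sub_half]
  exact integrableOn_Ici_and_integral_eq_of_hasDerivAt_neg
    (fun x _ => hasDerivAt_pendulumEnergy_of_solution hψ heq x)
    (fun x _ => sq_nonneg _) (tendsto_pendulumEnergy hlim hlim')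
end

section
/- Let C₀ > 0 and let w : [1/2,1] → ℝ be twice continuously differentiable with w(1) = 0 and w'(1) = 0. Suppose that (1 − r²)·(w''(r) + (4/r)·w'(r)) + 2·w(r) − w(r)³ = 0 for all r ∈ [1/2,1), and that |w''(r)| ≤ C₀·(1 − r)^{1/2} for all r ∈ [1/2,1]. Then w(r) = 0 for every r ∈ [1 − 1/(100·(1 + C₀³)), 1]. -/
open Set

/-!
Near `r = 1` the equation is dominated by its degenerate factor `1 - r²`. If
`|w''| ≤ M (1 - r)^(1/2)`, integrating twice from `r = 1` gives `|w'| ≤ (2/3) M (1 - r)^(3/2)` and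
`|w| ≤ (4/15) M (1 - r)^(5/2)`; solving the equation for `w''` then gives
`|w''| ≤ (M/2) (1 - r)^(1/2)` as soon as `1 - r` and `M² (1 - r)` are small. Iterating from
`M = C₀` forces `w'' = 0` near `1`, and the vanishing boundary data give `w = 0`.
-/

theorem antitoneOn_add_of_deriv_le_neg_deriv {F F' B B' : ℝ → ℝ} {a b : ℝ}
    (hF : ContinuousOn F (Icc a b)) (hB : ContinuousOn B (Icc a b))
    (hF' : ∀ x ∈ Ioo a b, HasDerivAt F (F' x) x) (hB' : ∀ x ∈ Ioo a b, HasDerivAt B (B' x) x)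
    (hle : ∀ x ∈ Ioo a b, F' x ≤ -B' x) : AntitoneOn (fun y => B y + F y) (Icc a b) := by
  refine antitoneOn_of_hasDerivWithinAt_nonpos (convex_Icc a b) (hB.add hF)
    (fun y hy => ?_) (fun y hy => ?_) (f' := fun y => B' y + F' y) <;> rw [interior_Icc] at *
  · exact ((hB' y hy).add (hF' y hy)).hasDerivWithinAt
  · linarith [hle y hy]

theorem abs_sub_le_of_abs_deriv_le_neg_deriv {F F' B B' : ℝ → ℝ} {a b : ℝ}
    (hF : ContinuousOn F (Icc a b)) (hB : ContinuousOn B (Icc a b))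
    (hF' : ∀ x ∈ Ioo a b, HasDerivAt F (F' x) x) (hB' : ∀ x ∈ Ioo a b, HasDerivAt B (B' x) x)
    (hle : ∀ x ∈ Ioo a b, |F' x| ≤ -B' x) {x : ℝ} (hx : x ∈ Icc a b) :
    |F x - F b| ≤ B x - B b := by
  have hb : b ∈ Icc a b := ⟨hx.1.trans hx.2, le_rfl⟩
  have hpos := antitoneOn_add_of_deriv_le_neg_deriv hF hB hF' hB'
    (fun y hy => (le_abs_self _).trans (hle y hy)) hx hb hx.2
  have hneg := antitoneOn_add_of_deriv_le_neg_deriv hF.neg hB (fun y hy => (hF' y hy).neg) hB'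
    (fun y hy => (neg_le_abs _).trans (hle y hy)) hx hb hx.2
  simp only [Pi.neg_apply] at hpos hneg
  rw [abs_le]
  constructor <;> linarith

theorem hasDerivAt_sub_rpow {b p x : ℝ} (hx : x < b) :
    HasDerivAt (fun y => (b - y) ^ p) (-(p * (b - x) ^ (p - 1))) x := by
  simpa using ((hasDerivAt_id x).const_sub b).rpow_const (Or.inl (sub_ne_zero.2 hx.ne'))

theorem abs_le_of_abs_deriv_le_rpow {F F' : ℝ → ℝ} {a b K q : ℝ} (hq : -1 < q)
    (hF : ContinuousOn F (Icc a b)) (hFb : F b = 0)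
    (hF' : ∀ x ∈ Ioo a b, HasDerivAt F (F' x) x) (hle : ∀ x ∈ Ioo a b, |F' x| ≤ K * (b - x) ^ q)
    {x : ℝ} (hx : x ∈ Icc a b) :
    |F x| ≤ K / (q + 1) * (b - x) ^ (q + 1) := by
  have hq1 : q + 1 ≠ 0 := by linarith
  have hB : ContinuousOn (fun y => K / (q + 1) * (b - y) ^ (q + 1)) (Icc a b) :=
    continuousOn_const.mul <| (continuousOn_const.sub continuousOn_id).rpow_const
      fun _ _ => Or.inr (by linarith)
  have hB' : ∀ y ∈ Ioo a b, HasDerivAt (fun y => K / (q + 1) * (b - y) ^ (q + 1))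
      (-(K * (b - y) ^ q)) y := fun y hy => by
    refine ((hasDerivAt_sub_rpow hy.2).const_mul (K / (q + 1))).congr_deriv ?_
    rw [add_sub_cancel_right]
    field_simp
  have h0 : (0 : ℝ) ^ (q + 1) = 0 := Real.zero_rpow hq1
  simpa [hFb, h0] using abs_sub_le_of_abs_deriv_le_neg_deriv hF hB hF' hB'
    (fun y hy => by simpa using hle y hy) hx

theorem abs_le_half_of_selfSimilar_eq {r M s W F G : ℝ} (hr : 1 / 2 ≤ r) (hr1 : r < 1)
    (hu : 1 - r ≤ 1 / 100) (hM : 0 ≤ M) (hMu : M ^ 2 * (1 - r) ≤ 1 / 100)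
    (hs : 0 ≤ s) (hss : s * s = 1 - r)
    (heq : (1 - r ^ 2) * (G + 4 / r * F) + 2 * W - W ^ 3 = 0)
    (hW : |W| ≤ 4 / 15 * M * ((1 - r) ^ 2 * s)) (hF : |F| ≤ 2 / 3 * M * ((1 - r) * s)) :
    |G| ≤ M / 2 * s := by
  set u := 1 - r
  have hu0 : 0 < u := by linarith
  have hMus : 0 ≤ M * (u * s) := by positivity
  have hr2 : 0 < 1 - r ^ 2 := by nlinarith
  have hW3 : |W| ^ 3 ≤ 64 / 337500 * M * (u * s) :=
    calc |W| ^ 3 ≤ (4 / 15 * M * (u ^ 2 * s)) ^ 3 := by gcongr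
      _ = 64 / 3375 * M * (M ^ 2 * u) * u ^ 5 * (s * (s * s)) := by ring
      _ = 64 / 3375 * (M ^ 2 * u) * u ^ 5 * (M * (u * s)) := by rw [hss]; ring
      _ ≤ 64 / 3375 * (1 / 100) * 1 * (M * (u * s)) := by
        gcongr
        exact pow_le_one₀ hu0.le (by linarith)
      _ = 64 / 337500 * M * (u * s) := by ring
  have hW1 : |W| ≤ 4 / 1500 * M * (u * s) :=
    calc |W| ≤ 4 / 15 * u * (M * (u * s)) := by linarith
      _ ≤ 4 / 15 * (1 / 100) * (M * (u * s)) := by gcongr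
      _ = 4 / 1500 * M * (u * s) := by ring
  have hF1 : (1 - r ^ 2) * |4 / r * F| ≤ 32 / 300 * M * (u * s) := by
    have h4r : |4 / r| ≤ 8 := by
      rw [abs_of_pos (by positivity), div_le_iff₀ (by linarith)]; linarith
    calc (1 - r ^ 2) * |4 / r * F| ≤ 2 * u * (8 * (2 / 3 * M * (u * s))) := by
          rw [abs_mul]
          gcongr
          nlinarith
      _ = 32 / 3 * u * (M * (u * s)) := by ring
      _ ≤ 32 / 3 * (1 / 100) * (M * (u * s)) := by gcongr
      _ = 32 / 300 * M * (u * s) := by ring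
  have hG : u * |G| ≤ |W| ^ 3 + 2 * |W| + (1 - r ^ 2) * |4 / r * F| :=
    calc u * |G| ≤ (1 - r ^ 2) * |G| := by gcongr; nlinarith
      _ = |(1 - r ^ 2) * G| := by rw [abs_mul, abs_of_pos hr2]
      _ = |W ^ 3 + (-2 * W) + -((1 - r ^ 2) * (4 / r * F))| := by
        congr 1; linear_combination heq
      _ ≤ |W ^ 3| + |-2 * W| + |-((1 - r ^ 2) * (4 / r * F))| := abs_add_three _ _ _
      _ = |W| ^ 3 + 2 * |W| + (1 - r ^ 2) * |4 / r * F| := by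
        simp only [abs_pow, abs_neg, abs_mul, abs_two, abs_of_pos hr2]
  have : u * |G| ≤ u * (M / 2 * s) := by nlinarith
  exact le_of_mul_le_mul_left this hu0

theorem eq_zero_of_hasDerivAt_eq_zero {F F' : ℝ → ℝ} {a b : ℝ} (hF : ContinuousOn F (Icc a b))
    (hFb : F b = 0) (hF' : ∀ x ∈ Ioo a b, HasDerivAt F (F' x) x) (hF'0 : ∀ x ∈ Ioo a b, F' x = 0)
    {x : ℝ} (hx : x ∈ Icc a b) : F x = 0 := by
  have := abs_le_of_abs_deriv_le_rpow (K := 0) (q := 0) (by norm_num) hF hFb hF'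
    (fun y hy => by simp [hF'0 y hy]) hx
  simpa using this

/-- `w` solves the self-similar equation on `[a, 1)`, with `w'` and `w''` its first two
derivatives on `(a, 1)`; no differentiability is asked at the endpoints. -/
structure IsSelfSimilarSolutionOn (a : ℝ) (w w' w'' : ℝ → ℝ) : Prop where
  continuousOn : ContinuousOn w (Icc a 1)
  continuousOn_deriv : ContinuousOn w' (Icc a 1)
  hasDerivAt : ∀ x ∈ Ioo a 1, HasDerivAt w (w' x) x
  hasDerivAt_deriv : ∀ x ∈ Ioo a 1, HasDerivAt w' (w'' x) x
  ode : ∀ r ∈ Ico a 1, (1 - r ^ 2) * (w'' r + 4 / r * w' r) + 2 * w r - w r ^ 3 = 0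

namespace IsSelfSimilarSolutionOn

variable {a C : ℝ} {w w' w'' : ℝ → ℝ}

theorem abs_deriv2_le_half (h : IsSelfSimilarSolutionOn a w w' w'') (hw1 : w 1 = 0)
    (hw1' : w' 1 = 0) (ha : 1 / 2 ≤ a) (ha1 : 1 - a ≤ 1 / 100) (hC : 0 ≤ C)
    (hCa : C ^ 2 * (1 - a) ≤ 1 / 100) (hbd : ∀ r ∈ Icc a 1, |w'' r| ≤ C * (1 - r) ^ (1 / 2 : ℝ))
    {r : ℝ} (hr : r ∈ Icc a 1) : |w'' r| ≤ C / 2 * (1 - r) ^ (1 / 2 : ℝ) := by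
  have hw' : ∀ x ∈ Icc a 1, |w' x| ≤ C / (1 / 2 + 1) * (1 - x) ^ ((1 / 2 : ℝ) + 1) :=
    fun x hx => abs_le_of_abs_deriv_le_rpow (by norm_num) h.continuousOn_deriv hw1'
      h.hasDerivAt_deriv (fun y hy => hbd y (Ioo_subset_Icc_self hy)) hx
  have hw : ∀ x ∈ Icc a 1,
      |w x| ≤ C / (1 / 2 + 1) / (1 / 2 + 1 + 1) * (1 - x) ^ ((1 / 2 : ℝ) + 1 + 1) :=
    fun x hx => abs_le_of_abs_deriv_le_rpow (by norm_num) h.continuousOn hw1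
      h.hasDerivAt (fun y hy => hw' y (Ioo_subset_Icc_self hy)) hx
  rcases hr.2.eq_or_lt with rfl | hr1
  · simpa using hbd 1 hr
  have hu : 0 ≤ 1 - r := by linarith
  set s := (1 - r) ^ (1 / 2 : ℝ)
  have hss : s * s = 1 - r := by rw [← Real.rpow_add' hu (by norm_num)]; norm_num
  have h32 : (1 - r) ^ ((1 / 2 : ℝ) + 1) = (1 - r) * s := by
    rw [Real.rpow_add' hu (by norm_num), Real.rpow_one, mul_comm]
  have h52 : (1 - r) ^ ((1 / 2 : ℝ) + 1 + 1) = (1 - r) ^ 2 * s := by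
    rw [Real.rpow_add' hu (by norm_num), h32, Real.rpow_one]; ring
  refine abs_le_half_of_selfSimilar_eq (hr.1.trans' ha) hr1 (by linarith [hr.1]) hC
    (hCa.trans' (by gcongr; linarith [hr.1])) (by positivity) hss (h.ode r ⟨hr.1, hr1⟩) ?_ ?_
  · exact (h52 ▸ hw r hr).trans_eq (by ring)
  · exact (h32 ▸ hw' r hr).trans_eq (by ring)

theorem deriv2_eq_zero (h : IsSelfSimilarSolutionOn a w w' w'') (hw1 : w 1 = 0)
    (hw1' : w' 1 = 0) (ha : 1 / 2 ≤ a) (ha1 : 1 - a ≤ 1 / 100) (hC : 0 ≤ C)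
    (hCa : C ^ 2 * (1 - a) ≤ 1 / 100) (hbd : ∀ r ∈ Icc a 1, |w'' r| ≤ C * (1 - r) ^ (1 / 2 : ℝ))
    {r : ℝ} (hr : r ∈ Icc a 1) : w'' r = 0 := by
  have hn : ∀ n : ℕ, ∀ r ∈ Icc a 1, |w'' r| ≤ C / 2 ^ n * (1 - r) ^ (1 / 2 : ℝ) := by
    intro n
    induction n with
    | zero => simpa using hbd
    | succ n ih =>
      intro r hr
      have hCn : C / 2 ^ n ≤ C := div_le_self hC (one_le_pow₀ one_le_two)
      rw [pow_succ, ← div_div]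
      exact h.abs_deriv2_le_half hw1 hw1' ha ha1 (by positivity)
        (hCa.trans' (mul_le_mul_of_nonneg_right (by gcongr) (by linarith [hr.1, hr.2]))) ih hr
  have hlim : Filter.Tendsto (fun n : ℕ => C / 2 ^ n * (1 - r) ^ (1 / 2 : ℝ)) Filter.atTop
      (nhds 0) := by
    simpa [div_eq_mul_inv] using ((tendsto_pow_atTop_nhds_zero_of_lt_one
      (r := (1 / 2 : ℝ)) (by norm_num) (by norm_num)).const_mul C).mul_const ((1 - r) ^ (1 / 2 : ℝ))
  exact abs_nonpos_iff.mp (ge_of_tendsto' hlim fun n => hn n r hr)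

theorem eq_zero (h : IsSelfSimilarSolutionOn a w w' w'') (hw1 : w 1 = 0)
    (hw1' : w' 1 = 0) (ha : 1 / 2 ≤ a) (ha1 : 1 - a ≤ 1 / 100) (hC : 0 ≤ C)
    (hCa : C ^ 2 * (1 - a) ≤ 1 / 100) (hbd : ∀ r ∈ Icc a 1, |w'' r| ≤ C * (1 - r) ^ (1 / 2 : ℝ))
    {r : ℝ} (hr : r ∈ Icc a 1) : w r = 0 := by
  have hw'' x (hx : x ∈ Ioo a 1) : w'' x = 0 :=
    h.deriv2_eq_zero hw1 hw1' ha ha1 hC hCa hbd (Ioo_subset_Icc_self hx)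
  have hw' x (hx : x ∈ Ioo a 1) : w' x = 0 :=
    eq_zero_of_hasDerivAt_eq_zero h.continuousOn_deriv hw1' h.hasDerivAt_deriv hw''
      (Ioo_subset_Icc_self hx)
  exact eq_zero_of_hasDerivAt_eq_zero h.continuousOn hw1 h.hasDerivAt hw' hr

end IsSelfSimilarSolutionOn

theorem isSelfSimilarSolutionOn_of_contDiffOn {a b : ℝ} {w : ℝ → ℝ} (hb : b < 1) (hba : b ≤ a)
    (hw : ContDiffOn ℝ 2 w (Icc b 1))
    (heq : ∀ r ∈ Ico b 1, (1 - r ^ 2) * (derivWithin (derivWithin w (Icc b 1)) (Icc b 1) r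
      + 4 / r * derivWithin w (Icc b 1) r) + 2 * w r - w r ^ 3 = 0) :
    IsSelfSimilarSolutionOn a w (derivWithin w (Icc b 1))
      (derivWithin (derivWithin w (Icc b 1)) (Icc b 1)) := by
  have hw' : ContDiffOn ℝ 1 (derivWithin w (Icc b 1)) (Icc b 1) :=
    hw.derivWithin (uniqueDiffOn_Icc hb) (by norm_num)
  have hsub : Icc a 1 ⊆ Icc b 1 := Icc_subset_Icc_left hba
  have hderiv {f : ℝ → ℝ} (hf : DifferentiableOn ℝ f (Icc b 1)) (x : ℝ) (hx : x ∈ Ioo a 1) :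
      HasDerivAt f (derivWithin f (Icc b 1) x) x :=
    (hf x (hsub (Ioo_subset_Icc_self hx))).hasDerivWithinAt.hasDerivAt
      (Icc_mem_nhds (hba.trans_lt hx.1) hx.2)
  exact
    { continuousOn := hw.continuousOn.mono hsub
      continuousOn_deriv := hw'.continuousOn.mono hsub
      hasDerivAt := hderiv (hw.differentiableOn (by norm_num))
      hasDerivAt_deriv := hderiv (hw'.differentiableOn one_ne_zero)
      ode := fun r hr => heq r ⟨hba.trans hr.1, hr.2⟩ }

/-- Vanishing near r = 1 for solutions of the degenerate elliptic self-similar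
equation with vanishing boundary data (part of Section 5). -/
theorem degenerate_elliptic_vanishing (C₀ : ℝ) (hC₀ : 0 < C₀) (w : ℝ → ℝ)
    (hw : ContDiffOn ℝ 2 w (Icc (1/2 : ℝ) 1))
    (hw1 : w 1 = 0)
    (hw1' : derivWithin w (Icc (1/2 : ℝ) 1) 1 = 0)
    (heq : ∀ r ∈ Ico (1/2 : ℝ) 1,
      (1 - r ^ 2) *
          (derivWithin (derivWithin w (Icc (1/2 : ℝ) 1)) (Icc (1/2 : ℝ) 1) r
            + (4 / r) * derivWithin w (Icc (1/2 : ℝ) 1) r)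
        + 2 * w r - (w r) ^ 3 = 0)
    (hbd : ∀ r ∈ Icc (1/2 : ℝ) 1,
      |derivWithin (derivWithin w (Icc (1/2 : ℝ) 1)) (Icc (1/2 : ℝ) 1) r| ≤
        C₀ * Real.sqrt (1 - r)) :
    ∀ r ∈ Icc (1 - 1 / (100 * (1 + C₀ ^ 3))) 1, w r = 0 := by
  set δ : ℝ := 1 / (100 * (1 + C₀ ^ 3))
  have hδ : δ ≤ 1 / 100 := by
    rw [div_le_div_iff₀ (by positivity) (by norm_num)]; nlinarith [pow_pos hC₀ 3]
  have hCδ : C₀ ^ 2 * δ ≤ 1 / 100 := by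
    have : C₀ ^ 2 ≤ 1 + C₀ ^ 3 := by
      nlinarith [sq_nonneg (C₀ - 1), mul_nonneg hC₀.le (sq_nonneg (C₀ - 1))]
    rw [mul_one_div, div_le_div_iff₀ (by positivity) (by norm_num)]; nlinarith
  have hsol := isSelfSimilarSolutionOn_of_contDiffOn (a := 1 - δ) (by norm_num)
    (by linarith) hw heq
  refine fun r hr => hsol.eq_zero hw1 hw1' (by linarith) (by linarith) hC₀.le
    (by rwa [sub_sub_cancel]) (fun x hx => ?_) hr
  simpa [Real.sqrt_eq_rpow] using hbd x ⟨by linarith [hx.1], hx.2⟩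
end

section
/- Let R₁ > 0, C > 0, and let v₀, v₁ : [R₁,∞) → ℝ be continuously differentiable. Assume that for every R ≥ R₁ the integral ∫_{R}^{∞} [ (v₀'(r)/r)² + (v₁'(r))² ] dr is finite and satisfies ( ∫_{R}^{∞} [ (v₀'(r)/r)² + (v₁'(r))² ] dr )^{1/2} ≤ C·R^{−1}·( 3R^{−3}·v₀(R)² + R^{−1}·v₁(R)² )^{3/2}. Then there exists a constant C′, depending only on C, such that for all r, r′ with R₁ ≤ r ≤ r′ ≤ 2r: |v₀(r) − v₀(r′)| ≤ C′·( r^{−4}·|v₀(r)|³ + r^{−1}·|v₁(r)|³ ) and |v₁(r) − v₁(r′)| ≤ C′·( r^{−5}·|v₀(r)|³ + r^{−2}·|v₁(r)|³ ). -/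
/-!
By the fundamental theorem of calculus and Cauchy–Schwarz on `[r, r']`,
`|v₀ r - v₀ r'| ≤ ‖v₀' / t‖₂ · ‖t‖₂` and `|v₁ r - v₁ r'| ≤ ‖v₁'‖₂ · √(r' - r)`, the `L²` norms
being taken over `(r, r']`. Both `L²` norms of the derivatives are bounded by the channel integral
from `r`, the weights by `2r√r` and `√r` since `r' ≤ 2r`, and the channel bound is turned into the
claimed cubic expression by the elementary inequality `(3u² + w²)³ ≤ (21/2)² (u³ + w³)²`, applied
to `u = |v₀ r|`, `w = r |v₁ r|`.
-/

open Set MeasureTheory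

theorem integral_abs_mul_abs_le_sqrt_mul_sqrt {α : Type*} [MeasurableSpace α] {μ : Measure α}
    {f g : α → ℝ} (hf : MemLp f 2 μ) (hg : MemLp g 2 μ) :
    ∫ a, |f a| * |g a| ∂μ ≤ √(∫ a, f a ^ 2 ∂μ) * √(∫ a, g a ^ 2 ∂μ) := by
  have h := integral_mul_norm_le_Lp_mul_Lq (μ := μ) Real.HolderConjugate.two_two
    (by simpa using hf) (by simpa using hg)
  simpa [Real.sqrt_eq_rpow, Real.rpow_two, sq_abs] using h

theorem integrableOn_and_setIntegral_le_of_le {α : Type*} [MeasurableSpace α] {μ : Measure α}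
    {f g : α → ℝ} {s t : Set α} (hst : s ⊆ t) (hf : AEStronglyMeasurable f (μ.restrict s))
    (hf₀ : ∀ x, 0 ≤ f x) (hfg : ∀ x, f x ≤ g x) (hg : IntegrableOn g t μ) :
    IntegrableOn f s μ ∧ ∫ x in s, f x ∂μ ≤ ∫ x in t, g x ∂μ := by
  have hfs : IntegrableOn f s μ := (hg.mono_set hst).mono' hf
    (ae_of_all _ fun x => (Real.norm_of_nonneg (hf₀ x)).trans_le (hfg x))
  refine ⟨hfs, ?_⟩
  calc ∫ x in s, f x ∂μ ≤ ∫ x in s, g x ∂μ := integral_mono hfs (hg.mono_set hst) hfg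
    _ ≤ ∫ x in t, g x ∂μ :=
      setIntegral_mono_set hg (ae_of_all _ fun x => (hf₀ x).trans (hfg x)) hst.eventuallyLE

theorem setIntegral_Ioc_sq_le {ρ : ℝ → ℝ} {a b M : ℝ} (hab : a ≤ b)
    (hM : ∀ t ∈ Ioc a b, |ρ t| ≤ M) :
    ∫ t in Ioc a b, ρ t ^ 2 ≤ M ^ 2 * (b - a) := by
  have h := norm_setIntegral_le_of_norm_le_const (μ := volume) (f := fun t => ρ t ^ 2)
    (C := M ^ 2) measure_Ioc_lt_top fun t ht => by
      simpa [sq_abs] using pow_le_pow_left₀ (abs_nonneg _) (hM t ht) 2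
  rw [Real.volume_real_Ioc_of_le hab] at h
  exact (le_abs_self _).trans (by simpa using h)

theorem abs_sub_le_sqrt_integral_deriv_div_sq_mul {v ρ : ℝ → ℝ} {a b : ℝ} (hab : a ≤ b)
    (hv : DifferentiableOn ℝ v (Icc a b)) (hρ : Continuous ρ) (hρ₀ : ∀ t ∈ Ioc a b, ρ t ≠ 0)
    (hint : IntegrableOn (fun t => (deriv v t / ρ t) ^ 2) (Ioc a b)) :
    |v b - v a| ≤ √(∫ t in Ioc a b, (deriv v t / ρ t) ^ 2) * √(∫ t in Ioc a b, ρ t ^ 2) := by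
  set μ := volume.restrict (Ioc a b)
  have hq : MemLp (fun t => deriv v t / ρ t) 2 μ :=
    (memLp_two_iff_integrable_sq ((measurable_deriv v).div hρ.measurable).aestronglyMeasurable).2
      hint
  have hρ2 : MemLp ρ 2 μ :=
    (memLp_two_iff_integrable_sq hρ.aestronglyMeasurable).2 (hρ.pow 2).integrableOn_Ioc
  have hfactor : ∀ t ∈ Ioc a b, deriv v t = deriv v t / ρ t * ρ t :=
    fun t ht => (div_mul_cancel₀ _ (hρ₀ t ht)).symm
  have hderiv : IntegrableOn (deriv v) (Ioc a b) :=
    IntegrableOn.congr_fun (hq.integrable_mul hρ2) (fun t ht => (hfactor t ht).symm)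
      measurableSet_Ioc
  have hftc : ∫ t in a..b, deriv v t = v b - v a :=
    intervalIntegral.integral_eq_sub_of_hasDerivAt_of_le hab hv.continuousOn
      (fun t ht => (hv.differentiableAt (Icc_mem_nhds ht.1 ht.2)).hasDerivAt)
      ((intervalIntegrable_iff_integrableOn_Ioc_of_le hab).2 hderiv)
  rw [← hftc, intervalIntegral.integral_of_le hab]
  calc |∫ t in Ioc a b, deriv v t| ≤ ∫ t in Ioc a b, |deriv v t| := abs_integral_le_integral_abs
    _ = ∫ t in Ioc a b, |deriv v t / ρ t| * |ρ t| :=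
      setIntegral_congr_fun measurableSet_Ioc fun t ht => by rw [← abs_mul, ← hfactor t ht]
    _ ≤ _ := integral_abs_mul_abs_le_sqrt_mul_sqrt hq hρ2

theorem abs_sub_le_sqrt_setIntegral_mul_sqrt {v ρ G : ℝ → ℝ} {a b M : ℝ} {s : Set ℝ}
    (hab : a ≤ b) (hs : Ioc a b ⊆ s) (hv : DifferentiableOn ℝ v (Icc a b)) (hρ : Continuous ρ)
    (hρ₀ : ∀ t ∈ Ioc a b, ρ t ≠ 0) (hM : ∀ t ∈ Ioc a b, |ρ t| ≤ M) (hG : IntegrableOn G s)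
    (hvG : ∀ t, (deriv v t / ρ t) ^ 2 ≤ G t) :
    |v b - v a| ≤ √(∫ t in s, G t) * √(M ^ 2 * (b - a)) := by
  obtain ⟨hint, hle⟩ := integrableOn_and_setIntegral_le_of_le hs
    (((measurable_deriv v).div hρ.measurable).pow_const 2).aestronglyMeasurable
    (fun _ => sq_nonneg _) hvG hG
  exact (abs_sub_le_sqrt_integral_deriv_div_sq_mul hab hv hρ hρ₀ hint).trans
    (mul_le_mul (Real.sqrt_le_sqrt hle) (Real.sqrt_le_sqrt (setIntegral_Ioc_sq_le hab hM))
      (Real.sqrt_nonneg _) (Real.sqrt_nonneg _))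

theorem three_sq_add_sq_cube_le (u w : ℝ) (hu : 0 ≤ u) (hw : 0 ≤ w) :
    (3 * u ^ 2 + w ^ 2) ^ 3 ≤ (21 / 2 * (u ^ 3 + w ^ 3)) ^ 2 := by
  nlinarith [mul_nonneg (sq_nonneg (u ^ 2 - w ^ 2)) (by positivity : (0 : ℝ) ≤ 2 * u ^ 2 + w ^ 2),
    mul_nonneg (sq_nonneg (u ^ 2 - w ^ 2)) (by positivity : (0 : ℝ) ≤ u ^ 2 + 2 * w ^ 2),
    mul_nonneg (pow_nonneg hu 3) (pow_nonneg hw 3), pow_nonneg hu 6, pow_nonneg hw 6]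

theorem rpow_three_halves_mul_sqrt_le (a b : ℝ) {r : ℝ} (hr : 0 < r) :
    (3 * a ^ 2 / r ^ 3 + b ^ 2 / r) ^ ((3 : ℝ) / 2) * √r ≤
      21 / 2 * (|a| ^ 3 / r ^ 4 + |b| ^ 3 / r) := by
  have hpow : (3 * a ^ 2 / r ^ 3 + b ^ 2 / r) ^ ((3 : ℝ) / 2) =
      √((3 * a ^ 2 / r ^ 3 + b ^ 2 / r) ^ 3) := by
    rw [Real.sqrt_eq_rpow, ← Real.rpow_natCast_mul (by positivity)]; norm_num
  have hlhs : (3 * a ^ 2 / r ^ 3 + b ^ 2 / r) ^ 3 * r =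
      (3 * |a| ^ 2 + (|b| * r) ^ 2) ^ 3 / (r ^ 4) ^ 2 := by
    rw [mul_pow, sq_abs, sq_abs]; field_simp
  have hrhs : 21 / 2 * (|a| ^ 3 / r ^ 4 + |b| ^ 3 / r) =
      21 / 2 * (|a| ^ 3 + (|b| * r) ^ 3) / r ^ 4 := by
    field_simp
  rw [hpow, ← Real.sqrt_mul (by positivity), hlhs, hrhs, Real.sqrt_le_iff, div_pow]
  exact ⟨by positivity, div_le_div_of_nonneg_right
    (three_sq_add_sq_cube_le _ _ (abs_nonneg a) (by positivity)) (by positivity)⟩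

/-- Difference estimates (Corollary 6.10) from the channel-of-energy inequality
written in the variables v₀, v₁. -/
theorem difference_estimates_from_channel (R₁ C : ℝ) (hR₁ : 0 < R₁) (hC : 0 < C)
    (v₀ v₁ : ℝ → ℝ)
    (hv₀ : ContDiffOn ℝ 1 v₀ (Ici R₁)) (hv₁ : ContDiffOn ℝ 1 v₁ (Ici R₁))
    (hint : ∀ R ≥ R₁,
      IntegrableOn (fun r => (deriv v₀ r / r) ^ 2 + (deriv v₁ r) ^ 2) (Ici R) ∧
      Real.sqrt (∫ r in Ici R, ((deriv v₀ r / r) ^ 2 + (deriv v₁ r) ^ 2)) ≤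
        C * R⁻¹ * (3 * (v₀ R) ^ 2 / R ^ 3 + (v₁ R) ^ 2 / R) ^ ((3:ℝ)/2)) :
    ∃ C' : ℝ, ∀ r r' : ℝ, R₁ ≤ r → r ≤ r' → r' ≤ 2 * r →
      |v₀ r - v₀ r'| ≤ C' * (|v₀ r| ^ 3 / r ^ 4 + |v₁ r| ^ 3 / r) ∧
      |v₁ r - v₁ r'| ≤ C' * (|v₀ r| ^ 3 / r ^ 5 + |v₁ r| ^ 3 / r ^ 2) := by
  refine ⟨21 * C, fun r r' hr hrr' hr' => ?_⟩
  have hr₀ : 0 < r := hR₁.trans_le hr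
  obtain ⟨hgint, hchannel⟩ := hint r hr
  set S := √(∫ t in Ici r, ((deriv v₀ t / t) ^ 2 + deriv v₁ t ^ 2))
  set E := |v₀ r| ^ 3 / r ^ 4 + |v₁ r| ^ 3 / r
  have hS : S * √r ≤ C * r⁻¹ * (21 / 2 * E) := by
    grw [hchannel, mul_assoc, rpow_three_halves_mul_sqrt_le _ _ hr₀]
  have hIoc : Ioc r r' ⊆ Ici r := Ioc_subset_Ioi_self.trans Ioi_subset_Ici_self
  have hIcc : Icc r r' ⊆ Ici R₁ := fun t ht => hr.trans ht.1
  have hΔ₀ := abs_sub_le_sqrt_setIntegral_mul_sqrt (ρ := id) (M := 2 * r) hrr' hIoc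
    ((hv₀.differentiableOn one_ne_zero).mono hIcc) continuous_id
    (fun t ht => (hr₀.trans ht.1).ne')
    (fun t ht => by rw [id, abs_of_pos (hr₀.trans ht.1)]; exact ht.2.trans hr') hgint
    (fun t => le_add_of_nonneg_right (sq_nonneg _))
  have hΔ₁ := abs_sub_le_sqrt_setIntegral_mul_sqrt (ρ := fun _ => 1) (M := 1) hrr' hIoc
    ((hv₁.differentiableOn one_ne_zero).mono hIcc) continuous_const (fun _ _ => one_ne_zero)
    (fun _ _ => by simp) hgint (fun t => by simpa using sq_nonneg (deriv v₀ t / t))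
  have hW₀ : √((2 * r) ^ 2 * (r' - r)) ≤ 2 * r * √r := by
    rw [Real.sqrt_mul (by positivity), Real.sqrt_sq (by positivity)]
    gcongr; linarith
  constructor
  · calc |v₀ r - v₀ r'| = |v₀ r' - v₀ r| := abs_sub_comm _ _
      _ ≤ S * (2 * r * √r) := hΔ₀.trans (by gcongr)
      _ = 2 * r * (S * √r) := by ring
      _ ≤ 2 * r * (C * r⁻¹ * (21 / 2 * E)) := by gcongr
      _ = 21 * C * E := by field_simp
  · calc |v₁ r - v₁ r'| = |v₁ r' - v₁ r| := abs_sub_comm _ _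
      _ ≤ S * √r := hΔ₁.trans (by gcongr; linarith)
      _ ≤ C * r⁻¹ * (21 / 2 * E) := hS
      _ = 21 / 2 * C * (|v₀ r| ^ 3 / r ^ 5 + |v₁ r| ^ 3 / r ^ 2) := by
        simp only [E]; field_simp
      _ ≤ 21 * C * (|v₀ r| ^ 3 / r ^ 5 + |v₁ r| ^ 3 / r ^ 2) := by gcongr; norm_num
end

section
/- Let R₁ ≥ 1, C₁ > 0, and δ₁ > 0 with 1 + 2·C₁·δ₁ ≤ 2^{1/6}. Let v₀, v₁ : [R₁,∞) → ℝ be continuous functions such that for all r, r′ with R₁ ≤ r ≤ r′ ≤ 2r: |v₀(r) − v₀(r′)| ≤ C₁·δ₁·( r^{−1}·|v₀(r)| + |v₁(r)| ) and |v₁(r) − v₁(r′)| ≤ C₁·δ₁·( r^{−2}·|v₀(r)| + r^{−1}·|v₁(r)| ). Then there exists a constant C such that |v₀(r)| + |v₁(r)| ≤ C·r^{1/6} for all r ≥ R₁. -/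
open Set

/-- Sub-polynomial growth bound r^{1/6} obtained by iterating the difference
estimates along dyadic scales. -/
theorem dyadic_growth_bound (R₁ C₁ δ₁ : ℝ) (hR₁ : 1 ≤ R₁) (hC₁ : 0 < C₁)
    (hδ₁ : 0 < δ₁) (hsmall : 1 + 2 * C₁ * δ₁ ≤ (2:ℝ) ^ ((1:ℝ)/6))
    (v₀ v₁ : ℝ → ℝ)
    (hv₀ : ContinuousOn v₀ (Ici R₁)) (hv₁ : ContinuousOn v₁ (Ici R₁))
    (hdiff : ∀ r r' : ℝ, R₁ ≤ r → r ≤ r' → r' ≤ 2 * r →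
      |v₀ r - v₀ r'| ≤ C₁ * δ₁ * (|v₀ r| / r + |v₁ r|) ∧
      |v₁ r - v₁ r'| ≤ C₁ * δ₁ * (|v₀ r| / r ^ 2 + |v₁ r| / r)) :
    ∃ C : ℝ, ∀ r ≥ R₁, |v₀ r| + |v₁ r| ≤ C * r ^ ((1:ℝ)/6) := by
  set b : ℝ := (2:ℝ) ^ ((1:ℝ)/6) with hb
  have hb1 : (1:ℝ) ≤ b := Real.one_le_rpow one_le_two (by norm_num)
  have hb0 : (0:ℝ) ≤ b := by linarith
  set S : ℝ → ℝ := fun r => |v₀ r| + |v₁ r| with hSdef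
  have hSnn : ∀ r, 0 ≤ S r := fun r => by positivity
  have key : ∀ r r', R₁ ≤ r → r ≤ r' → r' ≤ 2*r → S r' ≤ b * S r := by
    intro r r' hr hrr hr2
    obtain ⟨h0, h1⟩ := hdiff r r' hr hrr hr2
    have hr1 : (1:ℝ) ≤ r := le_trans hR₁ hr
    have hrpos : (0:ℝ) < r := by linarith
    have e0 : |v₀ r'| - |v₀ r| ≤ |v₀ r - v₀ r'| := by
      rw [abs_sub_comm]; exact abs_sub_abs_le_abs_sub _ _
    have e1 : |v₁ r'| - |v₁ r| ≤ |v₁ r - v₁ r'| := by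
      rw [abs_sub_comm]; exact abs_sub_abs_le_abs_sub _ _
    have d0 : |v₀ r| / r ≤ |v₀ r| := div_le_self (abs_nonneg _) hr1
    have d1 : |v₁ r| / r ≤ |v₁ r| := div_le_self (abs_nonneg _) hr1
    have d2 : |v₀ r| / r ^ 2 ≤ |v₀ r| := div_le_self (abs_nonneg _) (by nlinarith)
    have hS : S r' ≤ (1 + 2 * C₁ * δ₁) * S r := by
      have hcd : (0:ℝ) ≤ C₁ * δ₁ := by positivity
      have m0 := mul_le_mul_of_nonneg_left d0 hcd
      have m1 := mul_le_mul_of_nonneg_left d1 hcd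
      have m2 := mul_le_mul_of_nonneg_left d2 hcd
      simp only [hSdef]
      nlinarith [abs_nonneg (v₀ r), abs_nonneg (v₁ r)]
    calc S r' ≤ (1 + 2 * C₁ * δ₁) * S r := hS
      _ ≤ b * S r := mul_le_mul_of_nonneg_right hsmall (hSnn r)
  have hR0 : (0:ℝ) < R₁ := by linarith
  have P : ∀ n : ℕ, ∀ r, R₁ ≤ r → r ≤ R₁ * 2^n → S r ≤ b^n * S R₁ := by
    intro n
    induction n with
    | zero =>
      intro r h1 h2
      simp only [pow_zero, mul_one] at h2
      have : r = R₁ := le_antisymm h2 h1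
      simp [this]
    | succ n ih =>
      intro r h1 h2
      by_cases hc : r ≤ R₁ * 2^n
      · have := ih r h1 hc
        have hbn : b^n ≤ b^(n+1) := by
          calc b^n = b^n * 1 := (mul_one _).symm
            _ ≤ b^n * b := by
                exact mul_le_mul_of_nonneg_left hb1 (pow_nonneg hb0 n)
            _ = b^(n+1) := (pow_succ b n).symm
        exact this.trans (mul_le_mul_of_nonneg_right hbn (hSnn R₁))
      · push_neg at hc
        have hpow1 : (1:ℝ) ≤ 2^n := one_le_pow₀ one_le_two
        have hs : R₁ ≤ R₁ * 2^n := le_mul_of_one_le_right hR0.le hpow1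
        have hr2 : r ≤ 2 * (R₁ * 2^n) := by
          rw [pow_succ] at h2; linarith
        have hkey := key (R₁ * 2^n) r hs hc.le hr2
        have hih := ih (R₁ * 2^n) hs le_rfl
        calc S r ≤ b * S (R₁ * 2^n) := hkey
          _ ≤ b * (b^n * S R₁) := mul_le_mul_of_nonneg_left hih hb0
          _ = b^(n+1) * S R₁ := by ring
  refine ⟨b * S R₁, fun r hr => ?_⟩
  have hr1 : (1:ℝ) ≤ r := le_trans hR₁ hr
  have hrpos : (0:ℝ) < r := by linarith
  set x := r / R₁ with hx
  have hxpos : 0 < x := div_pos hrpos hR0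
  have hx1 : (1:ℝ) ≤ x := (one_le_div hR0).2 hr
  set n := ⌊Real.logb 2 x⌋₊ with hn
  have hlog0 : 0 ≤ Real.logb 2 x := Real.logb_nonneg one_lt_two hx1
  have hxeq : (2:ℝ) ^ Real.logb 2 x = x := Real.rpow_logb (by norm_num) (by norm_num) hxpos
  have h1 : (2:ℝ)^(n:ℝ) ≤ x := by
    calc (2:ℝ)^(n:ℝ) ≤ (2:ℝ)^(Real.logb 2 x) :=
          Real.rpow_le_rpow_of_exponent_le one_le_two (Nat.floor_le hlog0)
      _ = x := hxeq
  have h2 : x < (2:ℝ)^((n:ℝ)+1) := by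
    calc x = (2:ℝ)^(Real.logb 2 x) := hxeq.symm
      _ < (2:ℝ)^((n:ℝ)+1) :=
          Real.rpow_lt_rpow_of_exponent_lt one_lt_two (Nat.lt_floor_add_one _)
  have hcast : ((2:ℝ)^((n:ℝ)+1)) = (2:ℝ)^(n+1 : ℕ) := by
    rw [← Real.rpow_natCast (2:ℝ) (n+1)]; push_cast; ring_nf
  have hrle : r ≤ R₁ * 2^(n+1) := by
    have : x < (2:ℝ)^(n+1 : ℕ) := hcast ▸ h2
    have := (div_lt_iff₀ hR0).1 this
    nlinarith
  have hPr := P (n+1) r hr hrle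
  have h2n : (2:ℝ)^(n:ℕ) ≤ r := by
    have hxr : x ≤ r := by
      rw [hx, div_le_iff₀ hR0]; nlinarith
    have : (2:ℝ)^(n:ℝ) = (2:ℝ)^(n:ℕ) := Real.rpow_natCast 2 n
    linarith [h1, hxr, this.symm.le]
  have hbn : b^(n+1) ≤ b * r ^ ((1:ℝ)/6) := by
    have hbeq : b^(n+1) = b * ((2:ℝ)^(n:ℕ)) ^ ((1:ℝ)/6) := by
      rw [pow_succ, mul_comm (b^n) b, hb]
      congr 1
      rw [← Real.rpow_natCast ((2:ℝ) ^ ((1:ℝ)/6)) n, ← Real.rpow_natCast (2:ℝ) n,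
        ← Real.rpow_mul (by norm_num), ← Real.rpow_mul (by norm_num), mul_comm]
    rw [hbeq]
    have : ((2:ℝ)^(n:ℕ)) ^ ((1:ℝ)/6) ≤ r ^ ((1:ℝ)/6) :=
      Real.rpow_le_rpow (by positivity) h2n (by norm_num)
    exact mul_le_mul_of_nonneg_left this hb0
  calc S r ≤ b^(n+1) * S R₁ := hPr
    _ ≤ (b * r ^ ((1:ℝ)/6)) * S R₁ := mul_le_mul_of_nonneg_right hbn (hSnn R₁)
    _ = (b * S R₁) * r ^ ((1:ℝ)/6) := by ring
end

section
/- Let R₁ ≥ 1 and C > 0, and let v₀, v₁ : [R₁,∞) → ℝ satisfy |v₀(r)| ≤ C·r^{1/6} and |v₁(r)| ≤ C·r^{1/6} for all r ≥ R₁, and |v₁(r) − v₁(r′)| ≤ C·( r^{−5}·|v₀(r)|³ + r^{−2}·|v₁(r)|³ ) for all r, r′ with R₁ ≤ r ≤ r′ ≤ 2r. Then there exist a real number ℓ₁ and a constant C′ such that |v₁(r) − ℓ₁| ≤ C′·r^{−2} for all r ≥ R₁; in particular v₁(r) → ℓ₁ as r → ∞. -/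
open Set Filter


lemma chain_aux (g : ℝ → ℝ) (R K s : ℝ) (hR : 1 ≤ R) (hK : 0 ≤ K) (hs : 0 < s)
    (h : ∀ r ≥ R, ∀ r', r ≤ r' → r' ≤ 2 * r → |g r - g r'| ≤ K * r ^ (-s)) :
    ∀ n : ℕ, ∀ r ≥ R, ∀ r', r ≤ r' → r' ≤ 2 ^ (n+1) * r →
      |g r - g r'| ≤ (K / (1 - 2 ^ (-s))) * r ^ (-s) := by
  have hq0 : (0:ℝ) < 2 ^ (-s) := Real.rpow_pos_of_pos (by norm_num) _
  have hq1 : (2:ℝ) ^ (-s) < 1 :=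
    Real.rpow_lt_one_of_one_lt_of_neg (by norm_num) (by linarith)
  have h1q : (0:ℝ) < 1 - 2 ^ (-s) := by linarith
  have hKK : K ≤ K / (1 - 2 ^ (-s)) := by
    rw [le_div_iff₀ h1q]; nlinarith
  intro n
  induction n with
  | zero =>
    intro r hr r' h1 h2
    have := h r hr r' h1 (by norm_num at h2 ⊢; linarith)
    have hrs : (0:ℝ) ≤ r ^ (-s) := Real.rpow_nonneg (by linarith) _
    calc |g r - g r'| ≤ K * r ^ (-s) := this
      _ ≤ (K / (1 - 2 ^ (-s))) * r ^ (-s) := mul_le_mul_of_nonneg_right hKK hrs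
  | succ n ih =>
    intro r hr r' h1 h2
    have hr0 : (0:ℝ) < r := by linarith
    by_cases hc : r' ≤ 2 * r
    · have := h r hr r' h1 hc
      have hrs : (0:ℝ) ≤ r ^ (-s) := Real.rpow_nonneg hr0.le _
      calc |g r - g r'| ≤ K * r ^ (-s) := this
        _ ≤ (K / (1 - 2 ^ (-s))) * r ^ (-s) := mul_le_mul_of_nonneg_right hKK hrs
    · push_neg at hc
      have h2r : R ≤ 2 * r := by linarith
      have ihr := ih (2*r) h2r r' hc.le (by
        have : (2:ℝ) ^ (n+1+1) * r = 2 ^ (n+1) * (2*r) := by ring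
        linarith [this ▸ h2])
      have hstep := h r hr (2*r) (by linarith) le_rfl
      have hmul : ((2:ℝ)*r) ^ (-s) = 2 ^ (-s) * r ^ (-s) :=
        Real.mul_rpow (by norm_num) hr0.le
      have habs : |g r - g r'| ≤ |g r - g (2*r)| + |g (2*r) - g r'| := by
        calc |g r - g r'| = |(g r - g (2*r)) + (g (2*r) - g r')| := by ring_nf
          _ ≤ _ := abs_add_le _ _
      have hrs : (0:ℝ) ≤ r ^ (-s) := Real.rpow_nonneg hr0.le _
      have key : K * r ^ (-s) + (K / (1 - 2 ^ (-s))) * (2 ^ (-s) * r ^ (-s))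
          = (K / (1 - 2 ^ (-s))) * r ^ (-s) := by
        field_simp
        ring
      calc |g r - g r'| ≤ |g r - g (2*r)| + |g (2*r) - g r'| := habs
        _ ≤ K * r ^ (-s) + (K / (1 - 2 ^ (-s))) * ((2*r) ^ (-s)) := add_le_add hstep ihr
        _ = (K / (1 - 2 ^ (-s))) * r ^ (-s) := by rw [hmul]; exact key

lemma decay_limit (g : ℝ → ℝ) (R K s : ℝ) (hR : 1 ≤ R) (hK : 0 ≤ K) (hs : 0 < s)
    (h : ∀ r ≥ R, ∀ r', r ≤ r' → r' ≤ 2 * r → |g r - g r'| ≤ K * r ^ (-s)) :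
    ∃ ℓ : ℝ, (∀ r ≥ R, |g r - ℓ| ≤ (K / (1 - 2 ^ (-s))) * r ^ (-s)) ∧
      Tendsto g atTop (nhds ℓ) := by
  set K' := K / (1 - 2 ^ (-s)) with hK'
  have hq0 : (0:ℝ) < 2 ^ (-s) := Real.rpow_pos_of_pos (by norm_num) _
  have hq1 : (2:ℝ) ^ (-s) < 1 :=
    Real.rpow_lt_one_of_one_lt_of_neg (by norm_num) (by linarith)
  have h1q : (0:ℝ) < 1 - 2 ^ (-s) := by linarith
  have hK'0 : 0 ≤ K' := div_nonneg hK h1q.le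
  -- chain estimate
  have chain : ∀ r ≥ R, ∀ r', r ≤ r' → |g r - g r'| ≤ K' * r ^ (-s) := by
    intro r hr r' h1
    have hr0 : (0:ℝ) < r := by linarith
    obtain ⟨n, hn⟩ := pow_unbounded_of_one_lt (r'/r) (one_lt_two (α := ℝ))
    have : r' ≤ 2 ^ (n+1) * r := by
      rw [div_lt_iff₀ hr0] at hn
      have : (2:ℝ)^n ≤ 2^(n+1) := by
        apply pow_le_pow_right₀ (by norm_num); omega
      nlinarith
    exact chain_aux g R K s hR hK hs h n r hr r' h1 this
  -- the dyadic sequence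
  set a : ℕ → ℝ := fun n => g (2 ^ n * R) with ha
  have hbase : ∀ n : ℕ, R ≤ 2 ^ n * R := by
    intro n
    nlinarith [one_le_pow₀ (one_le_two (α := ℝ)) (n:=n)]
  have hpow : ∀ n : ℕ, ((2:ℝ) ^ n) ^ (-s) = ((2:ℝ) ^ (-s)) ^ n := by
    intro n
    rw [← Real.rpow_natCast (2:ℝ) n, ← Real.rpow_natCast ((2:ℝ)^(-s)) n,
      ← Real.rpow_mul (by norm_num), ← Real.rpow_mul (by norm_num), mul_comm]
  have hcau : CauchySeq a := by
    apply cauchySeq_of_le_geometric (2 ^ (-s)) (K' * R ^ (-s)) hq1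
    intro n
    rw [Real.dist_eq]
    have hR0 : (0:ℝ) < R := by linarith
    have hple : (2:ℝ) ^ n ≤ 2 ^ (n+1) := by
      apply pow_le_pow_right₀ (by norm_num); omega
    have step := chain (2 ^ n * R) (hbase n) (2 ^ (n+1) * R) (by nlinarith)
    have hmul : ((2:ℝ) ^ n * R) ^ (-s) = ((2:ℝ)^(-s))^n * R ^ (-s) := by
      rw [Real.mul_rpow (by positivity) (by linarith), hpow]
    calc |a n - a (n+1)| ≤ K' * ((2:ℝ) ^ n * R) ^ (-s) := step
      _ = K' * R ^ (-s) * ((2:ℝ)^(-s))^n := by rw [hmul]; ring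
  obtain ⟨ℓ, hℓ⟩ := cauchySeq_tendsto_of_complete hcau
  have hbound : ∀ r ≥ R, |g r - ℓ| ≤ K' * r ^ (-s) := by
    intro r hr
    have htends : Tendsto (fun n => |g r - a n|) atTop (nhds |g r - ℓ|) :=
      ((tendsto_const_nhds.sub hℓ).abs)
    apply le_of_tendsto htends
    have hgrow : Tendsto (fun n : ℕ => (2:ℝ) ^ n * R) atTop atTop :=
      (tendsto_pow_atTop_atTop_of_one_lt (one_lt_two (α := ℝ))).atTop_mul_const (by linarith)
    filter_upwards [hgrow.eventually_ge_atTop r] with n hn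
    exact chain r hr (2^n * R) hn
  refine ⟨ℓ, hbound, ?_⟩
  rw [tendsto_iff_norm_sub_tendsto_zero]
  have hto0 : Tendsto (fun r : ℝ => K' * r ^ (-s)) atTop (nhds 0) := by
    have := (tendsto_rpow_neg_atTop hs).const_mul K'
    simpa using this
  apply squeeze_zero' (Eventually.of_forall fun r => norm_nonneg _) _ hto0
  filter_upwards [eventually_ge_atTop R] with r hr
  simpa [Real.norm_eq_abs] using hbound r hr

/-- Convergence of v₁ with rate r^{-2} from the growth bounds and the dyadic
difference estimate (Claim 6.13). -/
theorem v1_limit_with_rate (R₁ C : ℝ) (hR₁ : 1 ≤ R₁) (hC : 0 < C)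
    (v₀ v₁ : ℝ → ℝ)
    (hg₀ : ∀ r ≥ R₁, |v₀ r| ≤ C * r ^ ((1:ℝ)/6))
    (hg₁ : ∀ r ≥ R₁, |v₁ r| ≤ C * r ^ ((1:ℝ)/6))
    (hdiff : ∀ r r' : ℝ, R₁ ≤ r → r ≤ r' → r' ≤ 2 * r →
      |v₁ r - v₁ r'| ≤ C * (|v₀ r| ^ 3 / r ^ 5 + |v₁ r| ^ 3 / r ^ 2)) :
    ∃ ℓ₁ C' : ℝ, (∀ r ≥ R₁, |v₁ r - ℓ₁| ≤ C' / r ^ 2) ∧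
      Tendsto v₁ atTop (nhds ℓ₁) := by
  have hcube : ∀ r : ℝ, 1 ≤ r → (r ^ ((1:ℝ)/6))^3 = r ^ ((1:ℝ)/2) := by
    intro r hr
    rw [← Real.rpow_natCast (r ^ ((1:ℝ)/6)) 3, ← Real.rpow_mul (by linarith)]
    norm_num
  have e09 : ∀ r : ℝ, 1 ≤ r → r ^ ((1:ℝ)/2) / r ^ 5 = r ^ (-(9/2:ℝ)) := by
    intro r hr
    rw [show (r:ℝ) ^ (5:ℕ) = r ^ ((5:ℕ):ℝ) from (Real.rpow_natCast r 5).symm,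
      ← Real.rpow_sub (by linarith)]
    norm_num
  have e03 : ∀ r : ℝ, 1 ≤ r → r ^ ((1:ℝ)/2) / r ^ 2 = r ^ (-(3/2:ℝ)) := by
    intro r hr
    rw [show (r:ℝ) ^ (2:ℕ) = r ^ ((2:ℕ):ℝ) from (Real.rpow_natCast r 2).symm,
      ← Real.rpow_sub (by linarith)]
    norm_num
  have key1 : ∀ r ≥ R₁, ∀ r', r ≤ r' → r' ≤ 2*r →
      |v₁ r - v₁ r'| ≤ (2*C^4) * r ^ (-(3/2:ℝ)) := by
    intro r hr r' h1 h2
    have hr1 : (1:ℝ) ≤ r := le_trans hR₁ hr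
    have hr0 : (0:ℝ) < r := by linarith
    have hv0 : |v₀ r|^3 ≤ C^3 * r ^ ((1:ℝ)/2) := by
      calc |v₀ r|^3 ≤ (C * r ^ ((1:ℝ)/6))^3 := pow_le_pow_left₀ (abs_nonneg _) (hg₀ r hr) 3
        _ = C^3 * (r ^ ((1:ℝ)/6))^3 := by ring
        _ = C^3 * r ^ ((1:ℝ)/2) := by rw [hcube r hr1]
    have hv1 : |v₁ r|^3 ≤ C^3 * r ^ ((1:ℝ)/2) := by
      calc |v₁ r|^3 ≤ (C * r ^ ((1:ℝ)/6))^3 := pow_le_pow_left₀ (abs_nonneg _) (hg₁ r hr) 3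
        _ = C^3 * (r ^ ((1:ℝ)/6))^3 := by ring
        _ = C^3 * r ^ ((1:ℝ)/2) := by rw [hcube r hr1]
    have e1 : |v₀ r|^3 / r^5 ≤ C^3 * r ^ (-(3/2:ℝ)) := by
      calc |v₀ r|^3 / r^5 ≤ (C^3 * r ^ ((1:ℝ)/2)) / r^5 := by gcongr
        _ = C^3 * (r ^ ((1:ℝ)/2) / r^5) := by ring
        _ = C^3 * r ^ (-(9/2:ℝ)) := by rw [e09 r hr1]
        _ ≤ C^3 * r ^ (-(3/2:ℝ)) := by
            have := Real.rpow_le_rpow_of_exponent_le hr1 (show (-(9/2:ℝ)) ≤ -(3/2:ℝ) by norm_num)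
            exact mul_le_mul_of_nonneg_left this (by positivity)
    have e2 : |v₁ r|^3 / r^2 ≤ C^3 * r ^ (-(3/2:ℝ)) := by
      calc |v₁ r|^3 / r^2 ≤ (C^3 * r ^ ((1:ℝ)/2)) / r^2 := by gcongr
        _ = C^3 * (r ^ ((1:ℝ)/2) / r^2) := by ring
        _ = C^3 * r ^ (-(3/2:ℝ)) := by rw [e03 r hr1]
    calc |v₁ r - v₁ r'| ≤ C * (|v₀ r| ^ 3 / r ^ 5 + |v₁ r| ^ 3 / r ^ 2) := hdiff r r' hr h1 h2
      _ ≤ C * (C^3 * r ^ (-(3/2:ℝ)) + C^3 * r ^ (-(3/2:ℝ))) :=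
          mul_le_mul_of_nonneg_left (add_le_add e1 e2) hC.le
      _ = (2*C^4) * r ^ (-(3/2:ℝ)) := by ring
  obtain ⟨ℓ, hℓbd, hℓt⟩ := decay_limit v₁ R₁ (2*C^4) (3/2) hR₁ (by positivity) (by norm_num) key1
  set K₁ : ℝ := (2*C^4) / (1 - 2 ^ (-(3/2:ℝ))) with hK₁
  have hq1 : (2:ℝ) ^ (-(3/2:ℝ)) < 1 :=
    Real.rpow_lt_one_of_one_lt_of_neg (by norm_num) (by norm_num)
  have hK₁0 : 0 ≤ K₁ := div_nonneg (by positivity) (by linarith)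
  set M : ℝ := |ℓ| + K₁ with hMdef
  have hM0 : 0 ≤ M := by positivity
  have hM : ∀ r ≥ R₁, |v₁ r| ≤ M := by
    intro r hr
    have hr1 : (1:ℝ) ≤ r := le_trans hR₁ hr
    have hle1 : r ^ (-(3/2:ℝ)) ≤ 1 :=
      Real.rpow_le_one_of_one_le_of_nonpos hr1 (by norm_num)
    have hb := hℓbd r hr
    have : K₁ * r ^ (-(3/2:ℝ)) ≤ K₁ := by nlinarith
    calc |v₁ r| = |(v₁ r - ℓ) + ℓ| := by ring_nf
      _ ≤ |v₁ r - ℓ| + |ℓ| := abs_add_le _ _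
      _ ≤ M := by rw [hMdef]; linarith
  have key2 : ∀ r ≥ R₁, ∀ r', r ≤ r' → r' ≤ 2*r →
      |v₁ r - v₁ r'| ≤ (C*(C^3 + M^3)) * r ^ (-(2:ℝ)) := by
    intro r hr r' h1 h2
    have hr1 : (1:ℝ) ≤ r := le_trans hR₁ hr
    have hr0 : (0:ℝ) < r := by linarith
    have hr2 : r ^ (-(2:ℝ)) = 1 / r ^ 2 := by
      rw [Real.rpow_neg hr0.le, show (r:ℝ) ^ (2:ℕ) = r ^ ((2:ℕ):ℝ) from (Real.rpow_natCast r 2).symm]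
      norm_num
    have hv0 : |v₀ r|^3 ≤ C^3 * r ^ ((1:ℝ)/2) := by
      calc |v₀ r|^3 ≤ (C * r ^ ((1:ℝ)/6))^3 := pow_le_pow_left₀ (abs_nonneg _) (hg₀ r hr) 3
        _ = C^3 * (r ^ ((1:ℝ)/6))^3 := by ring
        _ = C^3 * r ^ ((1:ℝ)/2) := by rw [hcube r hr1]
    have e1 : |v₀ r|^3 / r^5 ≤ C^3 * r ^ (-(2:ℝ)) := by
      calc |v₀ r|^3 / r^5 ≤ (C^3 * r ^ ((1:ℝ)/2)) / r^5 := by gcongr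
        _ = C^3 * (r ^ ((1:ℝ)/2) / r^5) := by ring
        _ = C^3 * r ^ (-(9/2:ℝ)) := by rw [e09 r hr1]
        _ ≤ C^3 * r ^ (-(2:ℝ)) := by
            have := Real.rpow_le_rpow_of_exponent_le hr1 (show (-(9/2:ℝ)) ≤ -(2:ℝ) by norm_num)
            exact mul_le_mul_of_nonneg_left this (by positivity)
    have e2 : |v₁ r|^3 / r^2 ≤ M^3 * r ^ (-(2:ℝ)) := by
      have hcube' : |v₁ r|^3 ≤ M^3 := pow_le_pow_left₀ (abs_nonneg _) (hM r hr) 3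
      rw [hr2]
      calc |v₁ r|^3 / r^2 ≤ M^3 / r^2 := by gcongr
        _ = M^3 * (1 / r^2) := by ring
    calc |v₁ r - v₁ r'| ≤ C * (|v₀ r| ^ 3 / r ^ 5 + |v₁ r| ^ 3 / r ^ 2) := hdiff r r' hr h1 h2
      _ ≤ C * (C^3 * r ^ (-(2:ℝ)) + M^3 * r ^ (-(2:ℝ))) :=
          mul_le_mul_of_nonneg_left (add_le_add e1 e2) hC.le
      _ = (C*(C^3 + M^3)) * r ^ (-(2:ℝ)) := by ring
  obtain ⟨ℓ', hbd', ht'⟩ := decay_limit v₁ R₁ (C*(C^3+M^3)) 2 hR₁ (by positivity) (by norm_num) key2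
  have hℓℓ' : ℓ' = ℓ := tendsto_nhds_unique ht' hℓt
  refine ⟨ℓ, (C*(C^3+M^3)) / (1 - 2 ^ (-(2:ℝ))), fun r hr => ?_, hℓt⟩
  have hr1 : (1:ℝ) ≤ r := le_trans hR₁ hr
  have hr0 : (0:ℝ) < r := by linarith
  have hr2 : r ^ (-(2:ℝ)) = 1 / r ^ 2 := by
    rw [Real.rpow_neg hr0.le, show (r:ℝ) ^ (2:ℕ) = r ^ ((2:ℕ):ℝ) from (Real.rpow_natCast r 2).symm]
    norm_num
  have := hbd' r hr
  rw [hℓℓ'] at this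
  rw [hr2] at this
  calc |v₁ r - ℓ| ≤ (C*(C^3+M^3)) / (1 - 2 ^ (-(2:ℝ))) * (1 / r^2) := this
    _ = (C*(C^3+M^3)) / (1 - 2 ^ (-(2:ℝ))) / r^2 := by ring
end

section
/- Let R₁ ≥ 1 and C > 0, and let v₀, v₁ : [R₁,∞) → ℝ satisfy |v₀(r)| ≤ C·r^{1/6} and |v₁(r)| ≤ C·r^{−2} for all r ≥ R₁, and |v₀(r) − v₀(r′)| ≤ C·( r^{−4}·|v₀(r)|³ + r^{−1}·|v₁(r)|³ ) for all r, r′ with R₁ ≤ r ≤ r′ ≤ 2r. Then there exist a real number ℓ₀ and a constant C′ such that |v₀(r) − ℓ₀| ≤ C′·r^{−4} for all r ≥ R₁; in particular r³·v₀(r)/r³ = v₀(r) → ℓ₀ as r → ∞. -/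
/-!
Summing the dyadic increments of `v₀` over the scales `2ᵏ r` bounds `|v₀ r - v₀ r'|` for all
`r ≤ r'` by twice the increment at scale `r`, provided the increments at least halve from one
scale to the next. The a priori growth `|v₀ r| ≤ C r^{1/6}` already makes the increments
`O(r⁻³)`, hence `v₀` is bounded; boundedness then improves them to `O(r⁻⁴)`, and this bound on
all long-range increments makes `v₀` Cauchy at infinity with limit `ℓ₀` and rate `r⁻⁴`.
-/

open Filter Topology

lemma abs_sub_le_two_mul_of_dyadic {f b : ℝ → ℝ} {R : ℝ} (hR : 0 < R)
    (hb : ∀ r ≥ R, 2 * b (2 * r) ≤ b r)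
    (h : ∀ r r', R ≤ r → r ≤ r' → r' ≤ 2 * r → |f r - f r'| ≤ b r)
    {r r' : ℝ} (hr : R ≤ r) (hrr' : r ≤ r') : |f r - f r'| ≤ 2 * b r := by
  have hb₀ : ∀ r ≥ R, 0 ≤ b r := fun r hr => by simpa using h r r hr le_rfl (by linarith)
  suffices H : ∀ n : ℕ, ∀ r r', R ≤ r → r ≤ r' → r' ≤ 2 ^ n * r → |f r - f r'| ≤ 2 * b r by
    obtain ⟨n, hn⟩ := pow_unbounded_of_one_lt (r' / r) (one_lt_two (α := ℝ))
    exact H n r r' hr hrr' ((div_lt_iff₀ (by linarith)).mp hn).le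
  intro n
  induction n with
  | zero =>
    intro r r' hr hrr' hr'
    rw [le_antisymm (by simpa using hr') hrr', sub_self, abs_zero]
    linarith [hb₀ r hr]
  | succ n ih =>
    intro r r' hr hrr' hr'
    by_cases hnear : r' ≤ 2 * r
    · linarith [h r r' hr hrr' hnear, hb₀ r hr]
    · have hfar := ih (2 * r) r' (by linarith) (not_le.mp hnear).le
        (by rw [pow_succ] at hr'; linarith)
      calc |f r - f r'| ≤ |f r - f (2 * r)| + |f (2 * r) - f r'| := abs_sub_le _ _ _
        _ ≤ b r + 2 * b (2 * r) := add_le_add (h r (2 * r) hr (by linarith) le_rfl) hfar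
        _ ≤ 2 * b r := by linarith [hb r hr]

lemma two_mul_div_two_mul_pow_le {A r : ℝ} {q : ℕ} (hA : 0 ≤ A) (hr : 0 < r) (hq : 1 ≤ q) :
    2 * (A / (2 * r) ^ q) ≤ A / r ^ q := by
  have h2q : (2 : ℝ) ≤ 2 ^ q := by simpa using pow_le_pow_right₀ one_le_two hq
  calc 2 * (A / (2 * r) ^ q) = 2 / 2 ^ q * (A / r ^ q) := by rw [mul_pow]; field_simp
    _ ≤ 1 * (A / r ^ q) := by gcongr; exact (div_le_one (by positivity)).mpr h2q
    _ = A / r ^ q := one_mul _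

lemma abs_sub_le_of_dyadic_div_pow {f : ℝ → ℝ} {R A : ℝ} {q : ℕ} (hR : 0 < R) (hA : 0 ≤ A)
    (hq : 1 ≤ q) (h : ∀ r r', R ≤ r → r ≤ r' → r' ≤ 2 * r → |f r - f r'| ≤ A / r ^ q)
    {r r' : ℝ} (hr : R ≤ r) (hrr' : r ≤ r') : |f r - f r'| ≤ 2 * (A / r ^ q) :=
  abs_sub_le_two_mul_of_dyadic (b := fun r => A / r ^ q) hR
    (fun _ hr => two_mul_div_two_mul_pow_le hA (by linarith) hq) h hr hrr'

lemma exists_tendsto_of_abs_sub_le {f b : ℝ → ℝ} {R : ℝ} (hb : Tendsto b atTop (𝓝 0))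
    (h : ∀ r r', R ≤ r → r ≤ r' → |f r - f r'| ≤ b r) :
    ∃ ℓ, Tendsto f atTop (𝓝 ℓ) ∧ ∀ r ≥ R, |f r - ℓ| ≤ b r := by
  have hcauchy : CauchySeq f := by
    refine Metric.cauchySeq_iff'.mpr fun ε hε => ?_
    obtain ⟨N, hbN, hN⟩ :=
      ((hb.eventually (gt_mem_nhds hε)).and (eventually_ge_atTop R)).exists
    refine ⟨N, fun r hr => ?_⟩
    rw [Real.dist_eq, abs_sub_comm]
    exact (h N r hN hr).trans_lt hbN
  obtain ⟨ℓ, hℓ⟩ := cauchySeq_tendsto_of_complete hcauchy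
  refine ⟨ℓ, hℓ, fun r hr => le_of_tendsto (tendsto_const_nhds.sub hℓ).abs ?_⟩
  filter_upwards [eventually_ge_atTop r] with r' hr' using h r r' hr hr'

lemma abs_sub_le_of_abs_cube_div_le {R₁ C K : ℝ} {q : ℕ} (hR₁ : 1 ≤ R₁) (hq : q ≤ 4)
    {v₀ v₁ : ℝ → ℝ} (hg₁ : ∀ r ≥ R₁, |v₁ r| ≤ C / r ^ 2)
    (hdiff : ∀ r r' : ℝ, R₁ ≤ r → r ≤ r' → r' ≤ 2 * r →
      |v₀ r - v₀ r'| ≤ C * (|v₀ r| ^ 3 / r ^ 4 + |v₁ r| ^ 3 / r))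
    (hC : 0 ≤ C) (hcube : ∀ r ≥ R₁, |v₀ r| ^ 3 / r ^ 4 ≤ K / r ^ q) :
    ∀ r r', R₁ ≤ r → r ≤ r' → r' ≤ 2 * r → |v₀ r - v₀ r'| ≤ C * (K + C ^ 3) / r ^ q := by
  intro r r' hr hrr' hr'
  have hr₁ : 1 ≤ r := hR₁.trans hr
  have hv₁ : |v₁ r| ^ 3 / r ≤ C ^ 3 / r ^ q :=
    calc |v₁ r| ^ 3 / r ≤ (C / r ^ 2) ^ 3 / r := by gcongr; exact hg₁ r hr
      _ = C ^ 3 / r ^ 7 := by rw [div_pow, div_div, ← pow_mul, ← pow_succ]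
      _ ≤ C ^ 3 / r ^ q := by gcongr C ^ 3 / ?_; exact pow_le_pow_right₀ hr₁ (by omega)
  calc |v₀ r - v₀ r'| ≤ C * (|v₀ r| ^ 3 / r ^ 4 + |v₁ r| ^ 3 / r) := hdiff r r' hr hrr' hr'
    _ ≤ C * (K / r ^ q + C ^ 3 / r ^ q) :=
      mul_le_mul_of_nonneg_left (add_le_add (hcube r hr) hv₁) hC
    _ = C * (K + C ^ 3) / r ^ q := by ring

lemma abs_cube_le_of_abs_le_mul_rpow {x C r : ℝ} (hr : 1 ≤ r) (hx : |x| ≤ C * r ^ ((1 : ℝ) / 6)) :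
    |x| ^ 3 ≤ C ^ 3 * r := by
  have hC : 0 ≤ C := nonneg_of_mul_nonneg_left ((abs_nonneg x).trans hx) (by positivity)
  calc |x| ^ 3 ≤ (C * r ^ ((1 : ℝ) / 6)) ^ 3 := by gcongr
    _ = C ^ 3 * r ^ ((1 : ℝ) / 2) := by
      rw [mul_pow, ← Real.rpow_natCast (r ^ ((1 : ℝ) / 6)), ← Real.rpow_mul (by linarith)]
      norm_num
    _ ≤ C ^ 3 * r := by
      gcongr
      simpa using Real.rpow_le_rpow_of_exponent_le hr (show (1 : ℝ) / 2 ≤ 1 by norm_num)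

/-- Convergence of v₀ with rate r^{-4} once v₁ decays like r^{-2}
(final step of Lemma 6.9). -/
theorem v0_limit_with_rate (R₁ C : ℝ) (hR₁ : 1 ≤ R₁) (hC : 0 < C)
    (v₀ v₁ : ℝ → ℝ)
    (hg₀ : ∀ r ≥ R₁, |v₀ r| ≤ C * r ^ ((1:ℝ)/6))
    (hg₁ : ∀ r ≥ R₁, |v₁ r| ≤ C / r ^ 2)
    (hdiff : ∀ r r' : ℝ, R₁ ≤ r → r ≤ r' → r' ≤ 2 * r →
      |v₀ r - v₀ r'| ≤ C * (|v₀ r| ^ 3 / r ^ 4 + |v₁ r| ^ 3 / r)) :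
    ∃ ℓ₀ C' : ℝ, (∀ r ≥ R₁, |v₀ r - ℓ₀| ≤ C' / r ^ 4) ∧
      Tendsto v₀ atTop (nhds ℓ₀) := by
  have hR₀ : 0 < R₁ := by linarith
  have hcube₃ : ∀ r ≥ R₁, |v₀ r| ^ 3 / r ^ 4 ≤ C ^ 3 / r ^ 3 := fun r hr => by
    have hr₀ : 0 < r := by linarith
    calc |v₀ r| ^ 3 / r ^ 4 ≤ C ^ 3 * r / r ^ 4 := by
          gcongr; exact abs_cube_le_of_abs_le_mul_rpow (hR₁.trans hr) (hg₀ r hr)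
      _ = C ^ 3 / r ^ 3 := by field_simp
  set M := |v₀ R₁| + 2 * (C * (C ^ 3 + C ^ 3) / R₁ ^ 3)
  have hbdd : ∀ r ≥ R₁, |v₀ r| ≤ M := fun r hr => by
    have := abs_sub_le_of_dyadic_div_pow hR₀ (by positivity) (by norm_num)
      (abs_sub_le_of_abs_cube_div_le hR₁ (by norm_num) hg₁ hdiff hC.le hcube₃) le_rfl hr
    linarith [abs_sub_abs_le_abs_sub (v₀ r) (v₀ R₁), abs_sub_comm (v₀ r) (v₀ R₁)]
  have hcube₄ : ∀ r ≥ R₁, |v₀ r| ^ 3 / r ^ 4 ≤ M ^ 3 / r ^ 4 := fun r hr => by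
    gcongr; exact hbdd r hr
  have hdecay : Tendsto (fun r : ℝ => 2 * (C * (M ^ 3 + C ^ 3) / r ^ 4)) atTop (𝓝 0) := by
    simpa using ((tendsto_const_nhds (x := C * (M ^ 3 + C ^ 3))).div_atTop
      (tendsto_pow_atTop (α := ℝ) (n := 4) (by norm_num))).const_mul 2
  obtain ⟨ℓ₀, hlim, hrate⟩ := exists_tendsto_of_abs_sub_le hdecay fun r r' hr hrr' =>
    abs_sub_le_of_dyadic_div_pow hR₀ (by positivity) (by norm_num)
      (abs_sub_le_of_abs_cube_div_le hR₁ (by norm_num) hg₁ hdiff hC.le hcube₄) hr hrr'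
  exact ⟨ℓ₀, 2 * (C * (M ^ 3 + C ^ 3)), fun r hr => (hrate r hr).trans_eq (by ring), hlim⟩
end

section
/- Let R₁ ≥ 1 and C > 0, and let v₀, v₁ : [R₁,∞) → ℝ satisfy |v₀(r)| ≤ C·r^{−4} and |v₁(r)| ≤ C·r^{−2} for all r ≥ R₁, and, for all r, r′ with R₁ ≤ r ≤ r′ ≤ 2r: |v₀(r) − v₀(r′)| ≤ C·( r^{−4}·|v₀(r)|³ + r^{−1}·|v₁(r)|³ ) and |v₁(r) − v₁(r′)| ≤ C·( r^{−5}·|v₀(r)|³ + r^{−2}·|v₁(r)|³ ). Then there exists R ≥ R₁ such that v₀(r) = 0 and v₁(r) = 0 for all r ≥ R. -/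
open Set

set_option maxHeartbeats 1600000 in
/-- Compact support in the case ℓ₀ = 0: the decay bounds together with the cubic
difference estimates force v₀ and v₁ to vanish for large r (Claim 6.17). -/
theorem compact_support_from_decay (R₁ C : ℝ) (hR₁ : 1 ≤ R₁) (hC : 0 < C)
    (v₀ v₁ : ℝ → ℝ)
    (hd₀ : ∀ r ≥ R₁, |v₀ r| ≤ C / r ^ 4)
    (hd₁ : ∀ r ≥ R₁, |v₁ r| ≤ C / r ^ 2)
    (hdiff : ∀ r r' : ℝ, R₁ ≤ r → r ≤ r' → r' ≤ 2 * r →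
      |v₀ r - v₀ r'| ≤ C * (|v₀ r| ^ 3 / r ^ 4 + |v₁ r| ^ 3 / r) ∧
      |v₁ r - v₁ r'| ≤ C * (|v₀ r| ^ 3 / r ^ 5 + |v₁ r| ^ 3 / r ^ 2)) :
    ∃ R ≥ R₁, ∀ r ≥ R, v₀ r = 0 ∧ v₁ r = 0 := by
  set R : ℝ := max R₁ (1 + 8 * C ^ 3) with hRdef
  have hRR₁ : R₁ ≤ R := le_max_left _ _
  have hR1 : (1:ℝ) ≤ R := le_trans (by nlinarith [pow_pos hC 3]) (le_max_right _ _)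
  have hR8 : 8 * C ^ 3 ≤ R := le_trans (by nlinarith [pow_pos hC 3]) (le_max_right _ _)
  refine ⟨R, hRR₁, ?_⟩
  intro r hr
  have hr1 : (1:ℝ) ≤ r := le_trans hR1 hr
  have hr0 : (0:ℝ) ≤ r := by linarith
  -- key one-step inequality
  have key : ∀ s, R ≤ s → 3/4 * (|v₀ s| + |v₁ s|) ≤ |v₀ (2*s)| + |v₁ (2*s)| := by
    intro s hs
    have hs1 : (1:ℝ) ≤ s := le_trans hR1 hs
    have hs0 : (0:ℝ) < s := lt_of_lt_of_le one_pos hs1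
    have hsR₁ : R₁ ≤ s := le_trans hRR₁ hs
    have hs8 : 8 * C ^ 3 ≤ s := le_trans hR8 hs
    obtain ⟨h0, h1⟩ := hdiff s (2*s) hsR₁ (by linarith) (le_refl _)
    have ha := hd₀ s hsR₁
    have hb := hd₁ s hsR₁
    set a := |v₀ s| with hadef
    set b := |v₁ s| with hbdef
    have hanneg : 0 ≤ a := abs_nonneg _
    have hbnneg : 0 ≤ b := abs_nonneg _
    have has4 : a * s ^ 4 ≤ C := by
      rw [le_div_iff₀ (by positivity)] at ha; exact ha
    have hbs2 : b * s ^ 2 ≤ C := by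
      rw [le_div_iff₀ (by positivity)] at hb; exact hb
    have ha2 : a ^ 2 * s ^ 8 ≤ C ^ 2 := by
      nlinarith [mul_le_mul has4 has4 (by positivity) hC.le]
    have hb2 : b ^ 2 * s ^ 4 ≤ C ^ 2 := by
      nlinarith [mul_le_mul hbs2 hbs2 (by positivity) hC.le]
    have hs4 : (1:ℝ) ≤ s ^ 4 := one_le_pow₀ hs1
    have hs5 : (1:ℝ) ≤ s ^ 5 := one_le_pow₀ hs1
    have hs2 : (1:ℝ) ≤ s ^ 2 := one_le_pow₀ hs1
    have hss8 : s ≤ s ^ 8 := le_self_pow₀ hs1 (by norm_num)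
    have hss4 : s ≤ s ^ 4 := le_self_pow₀ hs1 (by norm_num)
    have t1 : a ^ 3 / s ^ 4 ≤ C ^ 2 * a / s := by
      rw [div_le_div_iff₀ (by positivity) hs0]
      have w1 : a ^ 3 * s ≤ a ^ 3 * s ^ 8 := mul_le_mul_of_nonneg_left hss8 (pow_nonneg hanneg 3)
      have w2 : a ^ 3 * s ^ 8 ≤ C ^ 2 * a := by nlinarith [mul_le_mul_of_nonneg_left ha2 hanneg]
      have w3 : C ^ 2 * a ≤ C ^ 2 * a * s ^ 4 := le_mul_of_one_le_right (by positivity) hs4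
      linarith
    have t2 : a ^ 3 / s ^ 5 ≤ C ^ 2 * a / s := by
      rw [div_le_div_iff₀ (by positivity) hs0]
      have w1 : a ^ 3 * s ≤ a ^ 3 * s ^ 8 := mul_le_mul_of_nonneg_left hss8 (pow_nonneg hanneg 3)
      have w2 : a ^ 3 * s ^ 8 ≤ C ^ 2 * a := by nlinarith [mul_le_mul_of_nonneg_left ha2 hanneg]
      have w3 : C ^ 2 * a ≤ C ^ 2 * a * s ^ 5 := le_mul_of_one_le_right (by positivity) hs5
      linarith
    have t3 : b ^ 3 / s ≤ C ^ 2 * b / s := by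
      rw [div_le_div_iff₀ hs0 hs0]
      have w1 : b ^ 3 * s ≤ b ^ 3 * s ^ 4 * s := by
        nlinarith [mul_nonneg (mul_nonneg (pow_nonneg hbnneg 3) hs0.le) (sub_nonneg.mpr hs4)]
      have w2 : b ^ 3 * s ^ 4 * s ≤ C ^ 2 * b * s := by
        nlinarith [mul_le_mul_of_nonneg_right (mul_le_mul_of_nonneg_left hb2 hbnneg) hs0.le]
      linarith
    have t4 : b ^ 3 / s ^ 2 ≤ C ^ 2 * b / s := by
      rw [div_le_div_iff₀ (by positivity) hs0]
      have w1 : b ^ 3 * s ≤ b ^ 3 * s ^ 4 := mul_le_mul_of_nonneg_left hss4 (pow_nonneg hbnneg 3)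
      have w2 : b ^ 3 * s ^ 4 ≤ C ^ 2 * b := by nlinarith [mul_le_mul_of_nonneg_left hb2 hbnneg]
      have w3 : C ^ 2 * b ≤ C ^ 2 * b * s ^ 2 := le_mul_of_one_le_right (by positivity) hs2
      linarith
    have tsum : C * (a ^ 3 / s ^ 4 + b ^ 3 / s) + C * (a ^ 3 / s ^ 5 + b ^ 3 / s ^ 2)
        ≤ 1/4 * (a + b) := by
      have u1 := mul_le_mul_of_nonneg_left (add_le_add t1 t3) hC.le
      have u2 := mul_le_mul_of_nonneg_left (add_le_add t2 t4) hC.le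
      have heq : C * (C ^ 2 * a / s + C ^ 2 * b / s) + C * (C ^ 2 * a / s + C ^ 2 * b / s)
          = 2 * C ^ 3 * (a + b) / s := by ring
      have hfin : 2 * C ^ 3 * (a + b) / s ≤ 1/4 * (a + b) := by
        rw [div_le_iff₀ hs0]
        nlinarith [mul_le_mul_of_nonneg_left hs8 (add_nonneg hanneg hbnneg)]
      linarith
    have l0 : a - |v₀ (2*s)| ≤ C * (a ^ 3 / s ^ 4 + b ^ 3 / s) :=
      le_trans (abs_sub_abs_le_abs_sub _ _) h0
    have l1 : b - |v₁ (2*s)| ≤ C * (a ^ 3 / s ^ 5 + b ^ 3 / s ^ 2) :=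
      le_trans (abs_sub_abs_le_abs_sub _ _) h1
    linarith
  -- iteration
  have iter : ∀ n : ℕ, (3/4:ℝ) ^ n * (|v₀ r| + |v₁ r|) ≤ |v₀ (2 ^ n * r)| + |v₁ (2 ^ n * r)| := by
    intro n
    induction n with
    | zero => simp
    | succ n ih =>
      have h2n : (1:ℝ) ≤ 2 ^ n := one_le_pow₀ (by norm_num)
      have hRr : R ≤ 2 ^ n * r := le_trans hr (le_mul_of_one_le_left hr0 h2n)
      have hk := key _ hRr
      calc (3/4:ℝ) ^ (n+1) * (|v₀ r| + |v₁ r|)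
          = 3/4 * ((3/4:ℝ) ^ n * (|v₀ r| + |v₁ r|)) := by ring
        _ ≤ 3/4 * (|v₀ (2 ^ n * r)| + |v₁ (2 ^ n * r)|) := by linarith
        _ ≤ |v₀ (2 * (2 ^ n * r))| + |v₁ (2 * (2 ^ n * r))| := hk
        _ = |v₀ (2 ^ (n+1) * r)| + |v₁ (2 ^ (n+1) * r)| := by rw [show 2 * (2 ^ n * r) = 2 ^ (n+1) * r by ring]
  -- decay bound
  have hdec : ∀ n : ℕ, |v₀ (2 ^ n * r)| + |v₁ (2 ^ n * r)| ≤ 2 * C / 4 ^ n := by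
    intro n
    have h2n : (1:ℝ) ≤ 2 ^ n := one_le_pow₀ (by norm_num)
    have h2nr1 : (1:ℝ) ≤ 2 ^ n * r := le_trans hr1 (le_mul_of_one_le_left hr0 h2n)
    have h2nr : R₁ ≤ 2 ^ n * r := le_trans (le_trans hRR₁ hr) (le_mul_of_one_le_left hr0 h2n)
    have h4n : (0:ℝ) < 4 ^ n := by positivity
    have p2 : (4:ℝ) ^ n ≤ (2 ^ n * r) ^ 2 := by
      have h44 : (4:ℝ) ^ n = (2 ^ n) ^ 2 := by rw [← pow_mul, pow_mul']; norm_num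
      nlinarith [mul_nonneg (sq_nonneg ((2:ℝ) ^ n)) (sub_nonneg.mpr (one_le_pow₀ hr1 : (1:ℝ) ≤ r ^ 2))]
    have p4 : (4:ℝ) ^ n ≤ (2 ^ n * r) ^ 4 := by
      have : ((2:ℝ) ^ n * r) ^ 4 = ((2 ^ n * r) ^ 2) ^ 2 := by ring
      nlinarith [p2, h4n, (one_le_pow₀ h2nr1 : (1:ℝ) ≤ (2 ^ n * r) ^ 2)]
    calc |v₀ (2 ^ n * r)| + |v₁ (2 ^ n * r)|
        ≤ C / (2 ^ n * r) ^ 4 + C / (2 ^ n * r) ^ 2 := add_le_add (hd₀ _ h2nr) (hd₁ _ h2nr)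
      _ ≤ C / 4 ^ n + C / 4 ^ n := by
          gcongr <;> first | exact p4 | exact p2
      _ = 2 * C / 4 ^ n := by ring
  -- conclude
  have hzero : |v₀ r| + |v₁ r| = 0 := by
    by_contra hne
    have hwpos : 0 < |v₀ r| + |v₁ r| :=
      (add_nonneg (abs_nonneg _) (abs_nonneg _)).lt_of_ne (Ne.symm hne)
    obtain ⟨n, hn⟩ := pow_unbounded_of_one_lt ((2*C)/(|v₀ r| + |v₁ r|)) (show (1:ℝ) < 3 by norm_num)
    have h1 := (iter n).trans (hdec n)
    have h4 : (0:ℝ) < 4 ^ n := by positivity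
    have h3 : (0:ℝ) < 3 ^ n := by positivity
    rw [div_lt_iff₀ hwpos] at hn
    rw [show (3/4:ℝ) ^ n = 3 ^ n / 4 ^ n from div_pow 3 4 n, div_mul_eq_mul_div,
      div_le_div_iff₀ h4 h4] at h1
    nlinarith
  have h₀ : |v₀ r| = 0 := by nlinarith [abs_nonneg (v₀ r), abs_nonneg (v₁ r)]
  have h₁ : |v₁ r| = 0 := by nlinarith [abs_nonneg (v₀ r), abs_nonneg (v₁ r)]
  exact ⟨abs_eq_zero.mp h₀, abs_eq_zero.mp h₁⟩
end

section
/- Let R₁ > 0 and C > 0, and let v : [R₁,∞) → ℝ² satisfy |v(r)| ≤ C·r^{−2} for all r ≥ R₁ and |v(r′) − v(r)| ≤ C·r^{−4}·|v(r)| for all r, r′ with R₁ ≤ r ≤ r′ ≤ 2r (here |·| denotes the Euclidean norm on ℝ²). Then there exists R ≥ R₁ such that v(r) = (0,0) for all r ≥ R. -/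
/-!
Once `r⁻⁴ C ≤ 1/4`, the difference estimate between `r` and `2r` gives `‖v (2r)‖ ≥ (3/4) ‖v r‖`,
so `‖v (2ⁿ r)‖ ≥ (3/4)ⁿ ‖v r‖`. The decay bound says `‖v (2ⁿ r)‖ ≤ (C / r²) (1/4)ⁿ`, and since
`3/4 > 1/4` both can only hold if `v r = 0`.
-/

open Filter

lemma mul_norm_le_norm_of_norm_sub_le {E : Type*} [SeminormedAddCommGroup E] {x y : E} {ε : ℝ}
    (h : ‖y - x‖ ≤ ε * ‖x‖) : (1 - ε) * ‖x‖ ≤ ‖y‖ := by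
  have := norm_sub_norm_le x y
  rw [norm_sub_rev] at this
  linarith

lemma pow_mul_le_of_mul_le_comp_mul {f : ℝ → ℝ} {a q r : ℝ} (ha : 1 ≤ a) (hq : 0 ≤ q)
    (hr : 0 ≤ r) (hstep : ∀ s ≥ r, q * f s ≤ f (a * s)) (n : ℕ) :
    q ^ n * f r ≤ f (a ^ n * r) := by
  induction n with
  | zero => simp
  | succ n ih =>
    calc q ^ (n + 1) * f r = q * (q ^ n * f r) := by ring
      _ ≤ q * f (a ^ n * r) := mul_le_mul_of_nonneg_left ih hq
      _ ≤ f (a * (a ^ n * r)) := hstep _ (le_mul_of_one_le_left hr (one_le_pow₀ ha))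
      _ = f (a ^ (n + 1) * r) := by ring_nf

lemma eq_zero_of_pow_mul_le_mul_pow {a b x M : ℝ} (hb : 0 < b) (hab : b < a) (hx : 0 ≤ x)
    (h : ∀ n : ℕ, a ^ n * x ≤ M * b ^ n) : x = 0 := by
  by_contra hx0
  have hgrowth : Tendsto (fun n : ℕ => (a / b) ^ n * x) atTop atTop :=
    (tendsto_pow_atTop_atTop_of_one_lt ((one_lt_div hb).2 hab)).atTop_mul_const
      (lt_of_le_of_ne hx (Ne.symm hx0))
  obtain ⟨n, hn⟩ := (hgrowth.eventually_gt_atTop M).exists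
  have hbn : 0 < b ^ n := pow_pos hb n
  have : a ^ n * x ≤ M * b ^ n := h n
  rw [div_pow, div_mul_eq_mul_div, lt_div_iff₀ hbn] at hn
  linarith

theorem linearized_compact_support_general (R₁ C : ℝ)
    (v : ℝ → EuclideanSpace ℝ (Fin 2))
    (hdec : ∀ r ≥ R₁, ‖v r‖ ≤ C / r ^ 2)
    (hdiff : ∀ r r' : ℝ, R₁ ≤ r → r ≤ r' → r' ≤ 2 * r →
      ‖v r' - v r‖ ≤ C / r ^ 4 * ‖v r‖) :
    ∃ R ≥ R₁, ∀ r ≥ R, v r = 0 := by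
  refine ⟨max R₁ (max 1 (4 * C)), le_max_left _ _, fun r hr => ?_⟩
  simp only [ge_iff_le, max_le_iff] at hr
  obtain ⟨hrR₁, hr1, hrC⟩ := hr
  have hstep : ∀ s ≥ r, 3 / 4 * ‖v s‖ ≤ ‖v (2 * s)‖ := fun s hs => by
    have hs1 : 1 ≤ s := hr1.trans hs
    have hCs : C / s ^ 4 ≤ 1 / 4 := by
      rw [div_le_iff₀ (by positivity)]
      nlinarith [le_self_pow₀ hs1 (show 4 ≠ 0 by norm_num)]
    have := hdiff s (2 * s) (hrR₁.trans hs) (by linarith) le_rfl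
    have := mul_norm_le_norm_of_norm_sub_le
      (this.trans (mul_le_mul_of_nonneg_right hCs (norm_nonneg _)))
    norm_num at this ⊢
    linarith
  have hdyadic : ∀ n : ℕ, (3 / 4) ^ n * ‖v r‖ ≤ C / r ^ 2 * (1 / 4) ^ n := fun n => by
    have h2n : r ≤ 2 ^ n * r := le_mul_of_one_le_left (by linarith) (one_le_pow₀ (by norm_num))
    calc (3 / 4) ^ n * ‖v r‖ ≤ ‖v (2 ^ n * r)‖ :=
          pow_mul_le_of_mul_le_comp_mul (f := fun s => ‖v s‖) (by norm_num) (by norm_num)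
            (by linarith) hstep n
      _ ≤ C / (2 ^ n * r) ^ 2 := hdec _ (hrR₁.trans h2n)
      _ = C / r ^ 2 * (1 / 4) ^ n := by
        rw [mul_pow, ← pow_mul, mul_comm n 2, pow_mul]
        field_simp
        rw [mul_assoc, ← mul_pow]
        norm_num
  exact norm_eq_zero.mp
    (eq_zero_of_pow_mul_le_mul_pow (by norm_num) (by norm_num) (norm_nonneg _) hdyadic)

/-- Linearized compact-support argument: a vector-valued function with decay r^{-2}
and contractive dyadic difference estimate must vanish for large r. -/
theorem linearized_compact_support (R₁ C : ℝ) (hR₁ : 0 < R₁) (hC : 0 < C)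
    (v : ℝ → EuclideanSpace ℝ (Fin 2))
    (hdec : ∀ r ≥ R₁, ‖v r‖ ≤ C / r ^ 2)
    (hdiff : ∀ r r' : ℝ, R₁ ≤ r → r ≤ r' → r' ≤ 2 * r →
      ‖v r' - v r‖ ≤ C / r ^ 4 * ‖v r‖) :
    ∃ R ≥ R₁, ∀ r ≥ R, v r = 0 :=
  linearized_compact_support_general R₁ C v hdec hdiff
end

section
/- Let R₂ > 0 and C > 0, and let v₀, v₁ : (0,∞) → ℝ be continuously differentiable. Suppose there exists ρ₀ > R₂ such that v₀(r) = 0 and v₁(r) = 0 for all r ≥ ρ₀. Assume that for every R ≥ R₂ the integral ∫_{R}^{∞} [ (v₀'(r)/r)² + (v₁'(r))² ] dr is finite and satisfies ( ∫_{R}^{∞} [ (v₀'(r)/r)² + (v₁'(r))² ] dr )^{1/2} ≤ C·R^{−1}·( 3R^{−3}·v₀(R)² + R^{−1}·v₁(R)² )^{3/2}. Then v₀(r) = 0 and v₁(r) = 0 for every r > R₂. -/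
/-!
Write `E(R) = ∫_R^∞ ((v₀'/r)² + v₁'²)`. Since `v₀` and `v₁` vanish at `ρ₀`, Cauchy–Schwarz on
`[R, ρ₀]` bounds `3 v₀(R)²/R³ + v₁(R)²/R` by a multiple of `E(R)`, so the assumed cubic inequality
becomes `√E ≤ A E^{3/2}`: on `[r, ρ₀]` the tail energy is either `0` or at least `A⁻¹`. Being
continuous with `E(ρ₀) = 0`, it vanishes at `r`, and hence so do `v₀(r)` and `v₁(r)`.
-/

open Set MeasureTheory

theorem sq_intervalIntegral_le_mul_intervalIntegral_sq {h : ℝ → ℝ} {a b : ℝ} (hab : a ≤ b)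
    (hh : IntervalIntegrable h volume a b)
    (hh2 : IntervalIntegrable (fun x => h x ^ 2) volume a b) :
    (∫ x in a..b, h x) ^ 2 ≤ (b - a) * ∫ x in a..b, h x ^ 2 := by
  have hquad : ∀ t : ℝ,
      0 ≤ (b - a) * (t * t) + (-2 * ∫ x in a..b, h x) * t + ∫ x in a..b, h x ^ 2 := by
    intro t
    have hexp : ∫ x in a..b, (h x - t) ^ 2 =
        (b - a) * (t * t) + (-2 * ∫ x in a..b, h x) * t + ∫ x in a..b, h x ^ 2 := by
      simp only [sub_sq]
      rw [intervalIntegral.integral_add (hh2.sub (hh.const_mul _ |>.mul_const _))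
          intervalIntegrable_const,
        intervalIntegral.integral_sub hh2 (hh.const_mul _ |>.mul_const _),
        intervalIntegral.integral_mul_const, intervalIntegral.integral_const_mul,
        intervalIntegral.integral_const, smul_eq_mul]
      ring
    exact hexp ▸ intervalIntegral.integral_nonneg hab fun x _ => sq_nonneg _
  have := discrim_le_zero hquad
  rw [discrim] at this
  linarith

theorem sq_le_mul_integral_deriv_sq {w : ℝ → ℝ} {s : Set ℝ} {a b : ℝ} (hs : IsOpen s)
    (hw : ContDiffOn ℝ 1 w s) (hab : a ≤ b) (hsub : Icc a b ⊆ s) (hwb : w b = 0) :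
    w a ^ 2 ≤ (b - a) * ∫ x in a..b, deriv w x ^ 2 := by
  rw [← uIcc_of_le hab] at hsub
  have hw' : ContinuousOn (deriv w) (uIcc a b) :=
    (hw.continuousOn_deriv_of_isOpen hs le_rfl).mono hsub
  have hftc : ∫ x in a..b, deriv w x = - w a := by
    rw [intervalIntegral.integral_deriv_eq_sub (fun x hx => (hw.differentiableOn one_ne_zero x
      (hsub hx)).differentiableAt (hs.mem_nhds (hsub hx))) hw'.intervalIntegrable, hwb, zero_sub]
  calc w a ^ 2 = (∫ x in a..b, deriv w x) ^ 2 := by rw [hftc, neg_sq]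
    _ ≤ (b - a) * ∫ x in a..b, deriv w x ^ 2 :=
      sq_intervalIntegral_le_mul_intervalIntegral_sq hab hw'.intervalIntegrable
        (hw'.pow 2).intervalIntegrable

theorem sq_le_mul_setIntegral_Ici {w f : ℝ → ℝ} {s : Set ℝ} {a b c : ℝ} (hs : IsOpen s)
    (hw : ContDiffOn ℝ 1 w s) (hab : a ≤ b) (hsub : Icc a b ⊆ s) (hwb : w b = 0) (hc : 0 ≤ c)
    (hf : IntegrableOn f (Ici a)) (hf0 : ∀ x ≥ a, 0 ≤ f x)
    (hwf : ∀ x ∈ Icc a b, deriv w x ^ 2 ≤ c * f x) :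
    w a ^ 2 ≤ (b - a) * (c * ∫ x in Ici a, f x) := by
  have hfab : IntervalIntegrable f volume a b :=
    (intervalIntegrable_iff_integrableOn_Icc_of_le hab).2 (hf.mono_set Icc_subset_Ici_self)
  have hw' : ContinuousOn (deriv w) (uIcc a b) :=
    (hw.continuousOn_deriv_of_isOpen hs le_rfl).mono (uIcc_of_le hab ▸ hsub)
  calc w a ^ 2 ≤ (b - a) * ∫ x in a..b, deriv w x ^ 2 :=
        sq_le_mul_integral_deriv_sq hs hw hab hsub hwb
    _ ≤ (b - a) * ∫ x in a..b, c * f x := by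
        gcongr
        exact intervalIntegral.integral_mono_on hab (hw'.pow 2).intervalIntegrable
          (hfab.const_mul c) hwf
    _ ≤ (b - a) * (c * ∫ x in Ici a, f x) := by
        rw [intervalIntegral.integral_const_mul, intervalIntegral.integral_of_le hab]
        refine mul_le_mul_of_nonneg_left (mul_le_mul_of_nonneg_left ?_ hc) (sub_nonneg.2 hab)
        exact setIntegral_mono_set hf (ae_restrict_of_forall_mem measurableSet_Ici hf0)
          (Ioc_subset_Icc_self.trans Icc_subset_Ici_self).eventuallyLE

theorem continuousOn_setIntegral_Ici {f : ℝ → ℝ} {a b : ℝ} (hf : IntegrableOn f (Ici a)) :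
    ContinuousOn (fun R => ∫ x in Ici R, f x) (Icc a b) := by
  have hprim : ContinuousOn (fun R => ∫ x in Ioc a R, f x) (Icc a b) :=
    intervalIntegral.continuousOn_primitive (hf.mono_set Icc_subset_Ici_self)
  refine ((continuousOn_const (c := ∫ x in Ici a, f x)).sub hprim).congr fun R hR => ?_
  rw [Pi.sub_apply, ← intervalIntegral.integral_of_le hR.1,
    ← intervalIntegral.integral_Ici_sub_Ici' hf (hf.mono_set (Ici_subset_Ici.2 hR.1)),
    sub_sub_cancel]

theorem eq_zero_of_continuousOn_of_forall_eq_zero_or_le {f : ℝ → ℝ} {a b ε : ℝ}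
    (hf : ContinuousOn f (Icc a b)) (hab : a ≤ b) (hfb : f b = 0) (hε : 0 < ε)
    (hgap : ∀ x ∈ Icc a b, f x = 0 ∨ ε ≤ f x) : f a = 0 := by
  by_contra hfa
  have hεa : ε ≤ f a := (hgap a (left_mem_Icc.2 hab)).resolve_left hfa
  obtain ⟨x, hx, hfx⟩ := intermediate_value_Icc' hab hf
    (show ε / 2 ∈ Icc (f b) (f a) from ⟨by linarith, by linarith⟩)
  rcases hgap x hx with h | h <;> linarith

theorem eq_zero_or_inv_le_of_sqrt_le_mul_rpow {x A : ℝ} (hx : 0 ≤ x) (hA : 0 < A)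
    (h : √x ≤ A * x ^ (3 / 2 : ℝ)) : x = 0 ∨ A⁻¹ ≤ x := by
  rcases hx.eq_or_lt with rfl | hpos
  · exact Or.inl rfl
  right
  have hsqrt : 0 < √x := Real.sqrt_pos.2 hpos
  have hrpow : x ^ (3 / 2 : ℝ) = √x * x := by
    rw [Real.sqrt_eq_rpow, ← Real.rpow_add_one hpos.ne']
    norm_num
  rw [hrpow, ← mul_assoc, mul_comm A, mul_assoc] at h
  rw [inv_le_iff_one_le_mul₀' hA]
  exact (le_mul_iff_one_le_right hsqrt).1 h

noncomputable def energyDensity (v₀ v₁ : ℝ → ℝ) (r : ℝ) : ℝ :=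
  (deriv v₀ r / r) ^ 2 + (deriv v₁ r) ^ 2

noncomputable def tailEnergy (v₀ v₁ : ℝ → ℝ) (R : ℝ) : ℝ := ∫ r in Ici R, energyDensity v₀ v₁ r

section TailEnergy

variable {v₀ v₁ : ℝ → ℝ}

theorem energyDensity_nonneg (r : ℝ) : 0 ≤ energyDensity v₀ v₁ r := by
  unfold energyDensity
  positivity

theorem tailEnergy_nonneg (R : ℝ) : 0 ≤ tailEnergy v₀ v₁ R :=
  setIntegral_nonneg measurableSet_Ici fun r _ => energyDensity_nonneg r

theorem tailEnergy_eq_zero {ρ : ℝ} (hsupp : ∀ r ≥ ρ, v₀ r = 0 ∧ v₁ r = 0) :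
    tailEnergy v₀ v₁ ρ = 0 := by
  have hderiv : ∀ {v : ℝ → ℝ}, (∀ r ≥ ρ, v r = 0) → ∀ r ∈ Ioi ρ, deriv v r = 0 := by
    intro v hv r hr
    rw [Filter.EventuallyEq.deriv_eq (f := fun _ => (0 : ℝ)) (Filter.eventually_of_mem
      (Ioi_mem_nhds hr) fun y hy => hv y (le_of_lt hy)), deriv_const]
  rw [tailEnergy, integral_Ici_eq_integral_Ioi]
  refine setIntegral_eq_zero_of_forall_eq_zero fun r hr => ?_
  simp [energyDensity, hderiv (fun r hr => (hsupp r hr).1) r hr,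
    hderiv (fun r hr => (hsupp r hr).2) r hr]

theorem channel_le_mul_tailEnergy (hv₀ : ContDiffOn ℝ 1 v₀ (Ioi 0))
    (hv₁ : ContDiffOn ℝ 1 v₁ (Ioi 0)) {r R ρ : ℝ} (hr : 0 < r) (hrR : r ≤ R) (hRρ : R ≤ ρ)
    (hv₀ρ : v₀ ρ = 0) (hv₁ρ : v₁ ρ = 0) (hint : IntegrableOn (energyDensity v₀ v₁) (Ici R)) :
    3 * v₀ R ^ 2 / R ^ 3 + v₁ R ^ 2 / R ≤ (3 * ρ ^ 3 / r ^ 3 + ρ / r) * tailEnergy v₀ v₁ R := by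
  have hR : 0 < R := hr.trans_le hrR
  have hsub : Icc R ρ ⊆ Ioi 0 := fun x hx => hR.trans_le hx.1
  have hE := tailEnergy_nonneg (v₀ := v₀) (v₁ := v₁) R
  have h₀ : v₀ R ^ 2 ≤ ρ ^ 3 * tailEnergy v₀ v₁ R := by
    calc v₀ R ^ 2 ≤ (ρ - R) * (ρ ^ 2 * tailEnergy v₀ v₁ R) := by
          refine sq_le_mul_setIntegral_Ici isOpen_Ioi hv₀ hRρ hsub hv₀ρ (sq_nonneg ρ) hint
            (fun x _ => energyDensity_nonneg x) fun x hx => ?_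
          have hx0 : 0 < x := hR.trans_le hx.1
          calc deriv v₀ x ^ 2 = x ^ 2 * (deriv v₀ x / x) ^ 2 := by field_simp
            _ ≤ ρ ^ 2 * energyDensity v₀ v₁ x := by
                unfold energyDensity
                gcongr
                · exact hx.2
                · exact le_add_of_nonneg_right (sq_nonneg _)
      _ ≤ ρ * (ρ ^ 2 * tailEnergy v₀ v₁ R) := by gcongr; linarith
      _ = ρ ^ 3 * tailEnergy v₀ v₁ R := by ring
  have h₁ : v₁ R ^ 2 ≤ ρ * tailEnergy v₀ v₁ R := by
    calc v₁ R ^ 2 ≤ (ρ - R) * (1 * tailEnergy v₀ v₁ R) :=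
          sq_le_mul_setIntegral_Ici isOpen_Ioi hv₁ hRρ hsub hv₁ρ zero_le_one hint
            (fun x _ => energyDensity_nonneg x) fun x _ =>
              (one_mul (energyDensity v₀ v₁ x)).symm ▸ le_add_of_nonneg_left (sq_nonneg _)
      _ ≤ ρ * tailEnergy v₀ v₁ R := by rw [one_mul]; gcongr; linarith
  calc 3 * v₀ R ^ 2 / R ^ 3 + v₁ R ^ 2 / R
      ≤ 3 * (ρ ^ 3 * tailEnergy v₀ v₁ R) / r ^ 3 + ρ * tailEnergy v₀ v₁ R / r := by
        have hρ : 0 < ρ := hR.trans_le hRρ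
        gcongr
    _ = (3 * ρ ^ 3 / r ^ 3 + ρ / r) * tailEnergy v₀ v₁ R := by ring

theorem tailEnergy_eq_zero_or_inv_le (hv₀ : ContDiffOn ℝ 1 v₀ (Ioi 0))
    (hv₁ : ContDiffOn ℝ 1 v₁ (Ioi 0)) {C r R ρ : ℝ} (hC : 0 < C) (hr : 0 < r) (hrR : r ≤ R)
    (hRρ : R ≤ ρ) (hv₀ρ : v₀ ρ = 0) (hv₁ρ : v₁ ρ = 0)
    (hint : IntegrableOn (energyDensity v₀ v₁) (Ici R))
    (hcubic : √(tailEnergy v₀ v₁ R) ≤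
      C * R⁻¹ * (3 * v₀ R ^ 2 / R ^ 3 + v₁ R ^ 2 / R) ^ (3 / 2 : ℝ)) :
    tailEnergy v₀ v₁ R = 0 ∨
      (C * r⁻¹ * (3 * ρ ^ 3 / r ^ 3 + ρ / r) ^ (3 / 2 : ℝ))⁻¹ ≤ tailEnergy v₀ v₁ R := by
  have hR : 0 < R := hr.trans_le hrR
  have hK : 0 < 3 * ρ ^ 3 / r ^ 3 + ρ / r := by have := hR.trans_le hRρ; positivity
  have hE := tailEnergy_nonneg (v₀ := v₀) (v₁ := v₁) R
  refine eq_zero_or_inv_le_of_sqrt_le_mul_rpow hE (by positivity) ?_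
  calc √(tailEnergy v₀ v₁ R)
      ≤ C * R⁻¹ * (3 * v₀ R ^ 2 / R ^ 3 + v₁ R ^ 2 / R) ^ (3 / 2 : ℝ) := hcubic
    _ ≤ C * r⁻¹ * ((3 * ρ ^ 3 / r ^ 3 + ρ / r) * tailEnergy v₀ v₁ R) ^ (3 / 2 : ℝ) := by
        gcongr
        exact channel_le_mul_tailEnergy hv₀ hv₁ hr hrR hRρ hv₀ρ hv₁ρ hint
    _ = C * r⁻¹ * (3 * ρ ^ 3 / r ^ 3 + ρ / r) ^ (3 / 2 : ℝ) *
          tailEnergy v₀ v₁ R ^ (3 / 2 : ℝ) := by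
        rw [Real.mul_rpow hK.le hE]
        ring

end TailEnergy

theorem rigidity_compact_support_vanishing_general (R₂ C : ℝ) (hR₂ : 0 < R₂) (hC : 0 < C)
    (v₀ v₁ : ℝ → ℝ)
    (hv₀ : ContDiffOn ℝ 1 v₀ (Ioi 0)) (hv₁ : ContDiffOn ℝ 1 v₁ (Ioi 0))
    (ρ₀ : ℝ)
    (hsupp : ∀ r ≥ ρ₀, v₀ r = 0 ∧ v₁ r = 0)
    (hint : ∀ R ≥ R₂,
      IntegrableOn (fun r => (deriv v₀ r / r) ^ 2 + (deriv v₁ r) ^ 2) (Ici R) ∧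
      Real.sqrt (∫ r in Ici R, ((deriv v₀ r / r) ^ 2 + (deriv v₁ r) ^ 2)) ≤
        C * R⁻¹ * (3 * (v₀ R) ^ 2 / R ^ 3 + (v₁ R) ^ 2 / R) ^ ((3:ℝ)/2)) :
    ∀ r > R₂, v₀ r = 0 ∧ v₁ r = 0 := by
  intro r hr
  rcases le_or_gt ρ₀ r with hρr | hrρ
  · exact hsupp r hρr
  have hr0 : 0 < r := hR₂.trans hr
  obtain ⟨hv₀ρ, hv₁ρ⟩ := hsupp ρ₀ le_rfl
  have hgap : ∀ R ∈ Icc r ρ₀, tailEnergy v₀ v₁ R = 0 ∨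
      (C * r⁻¹ * (3 * ρ₀ ^ 3 / r ^ 3 + ρ₀ / r) ^ (3 / 2 : ℝ))⁻¹ ≤ tailEnergy v₀ v₁ R :=
    fun R hR => tailEnergy_eq_zero_or_inv_le hv₀ hv₁ hC hr0 hR.1 hR.2 hv₀ρ hv₁ρ
      (hint R (hr.le.trans hR.1)).1 (hint R (hr.le.trans hR.1)).2
  have hE : tailEnergy v₀ v₁ r = 0 :=
    eq_zero_of_continuousOn_of_forall_eq_zero_or_le
      (continuousOn_setIntegral_Ici (hint r hr.le).1) hrρ.le (tailEnergy_eq_zero hsupp)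
      (by have := hr0.trans hrρ; positivity) hgap
  have hchannel := channel_le_mul_tailEnergy hv₀ hv₁ hr0 le_rfl hrρ.le hv₀ρ hv₁ρ (hint r hr.le).1
  rw [hE, mul_zero] at hchannel
  simpa [hr0.ne'] using (add_eq_zero_iff_of_nonneg (by positivity) (by positivity)).1
    (le_antisymm hchannel (by positivity))

/-- Final rigidity step: a compactly supported pair satisfying the superlinear
channel inequality vanishes on all of (R₂, ∞). -/
theorem rigidity_compact_support_vanishing (R₂ C : ℝ) (hR₂ : 0 < R₂) (hC : 0 < C)
    (v₀ v₁ : ℝ → ℝ)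
    (hv₀ : ContDiffOn ℝ 1 v₀ (Ioi 0)) (hv₁ : ContDiffOn ℝ 1 v₁ (Ioi 0))
    (ρ₀ : ℝ) (hρ₀ : R₂ < ρ₀)
    (hsupp : ∀ r ≥ ρ₀, v₀ r = 0 ∧ v₁ r = 0)
    (hint : ∀ R ≥ R₂,
      IntegrableOn (fun r => (deriv v₀ r / r) ^ 2 + (deriv v₁ r) ^ 2) (Ici R) ∧
      Real.sqrt (∫ r in Ici R, ((deriv v₀ r / r) ^ 2 + (deriv v₁ r) ^ 2)) ≤
        C * R⁻¹ * (3 * (v₀ R) ^ 2 / R ^ 3 + (v₁ R) ^ 2 / R) ^ ((3:ℝ)/2)) :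
    ∀ r > R₂, v₀ r = 0 ∧ v₁ r = 0 :=
  rigidity_compact_support_vanishing_general R₂ C hR₂ hC v₀ v₁ hv₀ hv₁ ρ₀ hsupp hint
end
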